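/- arXiv:math/9910095 — 14 statements merged into one kernel-verified Lean document; each statement's English description precedes it below -/
import Mathlib

section
/- Let q ∈ ℂ with q ≠ 1, let α ∈ ℂ be nonzero, and let U be a nilpotent n×n complex matrix. Set A = α·E + U, where E is the n×n identity matrix. If B is an n×n complex matrix with AB = qBA, then B = 0. -/
/-- If `A = α • 1 + U` with `α ≠ 0` and `U` nilpotent, and
`A * B = q • (B * A)` with `q ≠ 1`, then `B = 0`. -/
theorem eq_zero_of_qspinor_with_unipotent {n : ℕ} (q α : ℂ) (hq : q ≠ 1) (hα : α ≠ 0)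
    (U B : Matrix (Fin n) (Fin n) ℂ) (hU : IsNilpotent U)
    (hAB : (α • (1 : Matrix (Fin n) (Fin n) ℂ) + U) * B
         = q • (B * (α • (1 : Matrix (Fin n) (Fin n) ℂ) + U))) :
    B = 0 := by
  set f : Module.End ℂ (Matrix (Fin n) (Fin n) ℂ) := LinearMap.mulLeft ℂ U with hfdef
  set g : Module.End ℂ (Matrix (Fin n) (Fin n) ℂ) := LinearMap.mulRight ℂ U with hgdef
  have hcomm : Commute f g := LinearMap.commute_mulLeft_right (R := ℂ) U U
  obtain ⟨k, hk⟩ := hU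
  have hf : IsNilpotent f := ⟨k, by
    ext x : 1
    simp [hfdef, LinearMap.pow_mulLeft, hk, LinearMap.mulLeft_apply]⟩
  have hg : IsNilpotent g := ⟨k, by
    ext x : 1
    simp [hgdef, LinearMap.pow_mulRight, hk, LinearMap.mulRight_apply]⟩
  have hT : IsNilpotent (f - q • g) :=
    Commute.isNilpotent_sub (hcomm.smul_right q) hf (hg.smul q)
  obtain ⟨m, hm⟩ := hT
  -- B is an eigenvector of f - q • g with eigenvalue (q-1)*α
  have heig : (f - q • g) B = ((q - 1) * α) • B := by
    have h1 : α • B + U * B = (q * α) • B + q • (B * U) := by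
      have := hAB
      rw [add_mul, mul_add, smul_add] at this
      simpa [Matrix.smul_mul, Matrix.mul_smul, smul_smul] using this
    have h2 : U * B - q • (B * U) = ((q - 1) * α) • B := by
      have h3 : U * B - q • (B * U) = (q * α) • B - α • B := by
        rw [sub_eq_sub_iff_add_eq_add, add_comm]
        exact h1
      rw [h3, ← sub_smul]; ring_nf
    simpa [hfdef, hgdef, LinearMap.mulLeft_apply, LinearMap.mulRight_apply,
      LinearMap.sub_apply, LinearMap.smul_apply] using h2
  have hpow : ∀ j : ℕ, ((f - q • g) ^ j) B = ((q - 1) * α) ^ j • B := by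
    intro j
    induction j with
    | zero => simp
    | succ j ih =>
      rw [pow_succ, Module.End.mul_apply, heig, map_smul, ih, smul_smul, ← pow_succ']
  have hz := hpow m
  rw [hm] at hz
  have hc : ((q - 1) * α) ^ m ≠ 0 :=
    pow_ne_zero _ (mul_ne_zero (sub_ne_zero.mpr hq) hα)
  have hz' : ((q - 1) * α) ^ m • B = 0 := by simpa using hz.symm
  exact (smul_eq_zero.mp hz').resolve_left hc
end

section
/- Let q ∈ ℂ with q ≠ 0 and q^m ≠ 1 for every positive integer m. For every representation of GL_q(2,ℂ) by n×n complex matrices A₁₁, A₁₂, A₂₁, A₂₂, there exists an invertible matrix u ∈ M_n(ℂ) such that all four matrices uA₁₁u⁻¹, uA₁₂u⁻¹, uA₂₁u⁻¹, uA₂₂u⁻¹ are upper triangular. -/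
/-- A representation of the algebra `GL_q(2,ℂ)` by `n×n` complex matrices:
the six defining relations together with invertibility of the quantum
determinant `A₁₁A₂₂ − qA₁₂A₂₁`. -/
def IsGLqRep {n : ℕ} (q : ℂ) (A₁₁ A₁₂ A₂₁ A₂₂ : Matrix (Fin n) (Fin n) ℂ) : Prop :=
  A₁₁ * A₁₂ = q • (A₁₂ * A₁₁) ∧
  A₁₁ * A₂₁ = q • (A₂₁ * A₁₁) ∧
  A₁₂ * A₂₂ = q • (A₂₂ * A₁₂) ∧
  A₂₁ * A₂₂ = q • (A₂₂ * A₂₁) ∧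
  A₁₂ * A₂₁ = A₂₁ * A₁₂ ∧
  A₁₁ * A₂₂ - A₂₂ * A₁₁ = (q - q⁻¹) • (A₁₂ * A₂₁) ∧
  IsUnit (A₁₁ * A₂₂ - q • (A₁₂ * A₂₁))

open Matrix Polynomial

namespace GLqAux

/-- The set of eigenvalues of a matrix over `ℂ` is finite. -/
lemma spec_finite {n : ℕ} (M : Matrix (Fin n) (Fin n) ℂ) :
    {μ : ℂ | ∃ v, v ≠ 0 ∧ M *ᵥ v = μ • v}.Finite := by
  have hint : IsIntegral ℂ (Matrix.toLinAlgEquiv' M : Module.End ℂ (Fin n → ℂ)) :=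
    LinearMap.isIntegral _
  refine (Polynomial.finite_setOf_isRoot (minpoly.ne_zero hint)).subset ?_
  rintro μ ⟨v, hv0, hv⟩
  refine Module.End.isRoot_of_hasEigenvalue ?_
  refine Module.End.hasEigenvalue_of_hasEigenvector (x := v) ?_
  exact ⟨Module.End.mem_eigenspace_iff.mpr
    (by rw [Matrix.toLinAlgEquiv'_apply]; exact hv), hv0⟩

/-- A matrix over `ℂ` all of whose eigenvalues vanish is nilpotent. -/
lemma nilpotent_of_spec_zero {n : ℕ} (M : Matrix (Fin n) (Fin n) ℂ)
    (h : ∀ (μ : ℂ) (v : Fin n → ℂ), v ≠ 0 → M *ᵥ v = μ • v → μ = 0) :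
    IsNilpotent M := by
  set φ := (Matrix.toLinAlgEquiv' M : Module.End ℂ (Fin n → ℂ)) with hφ
  have hint : IsIntegral ℂ φ := LinearMap.isIntegral _
  have hmon : (minpoly ℂ φ).Monic := minpoly.monic hint
  have hsp : (minpoly ℂ φ).Splits := IsAlgClosed.splits _
  have hroots : ∀ r ∈ (minpoly ℂ φ).roots, r = (0 : ℂ) := by
    intro r hr
    have h1 : Module.End.HasEigenvalue φ r :=
      Module.End.hasEigenvalue_of_isRoot (Polynomial.isRoot_of_mem_roots hr)
    obtain ⟨v, hv⟩ := Module.End.HasEigenvalue.exists_hasEigenvector h1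
    have hv1 : M *ᵥ v = r • v := by
      have h2 := hv.apply_eq_smul
      rwa [hφ, Matrix.toLinAlgEquiv'_apply] at h2
    exact h r v hv.2 hv1
  have hcard := Polynomial.splits_iff_card_roots.mp hsp
  have hXpow : minpoly ℂ φ = X ^ (minpoly ℂ φ).natDegree := by
    conv_lhs => rw [hsp.eq_prod_roots_of_monic hmon]
    rw [Multiset.map_congr (f := fun a => X - C a) (g := fun _ => X) rfl
      (fun a ha => by simp [hroots a ha]),
      Multiset.map_const', Multiset.prod_replicate, hcard]
  have hphi : φ ^ (minpoly ℂ φ).natDegree = 0 := by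
    have h3 := minpoly.aeval ℂ φ
    conv at h3 => rw [hXpow]
    rwa [map_pow, aeval_X] at h3
  refine ⟨(minpoly ℂ φ).natDegree, ?_⟩
  have h4 := congrArg (Matrix.toLinAlgEquiv' (R := ℂ) (n := Fin n)).symm hphi
  rwa [map_pow, map_zero, hφ, AlgEquiv.symm_apply_apply] at h4

/-- Eigenvector chains: if `X * M = c • (M * X)` and `v` is an eigenvector of `X` with
eigenvalue `μ`, then `M ^ k *ᵥ v` is an eigenvector (or zero) with eigenvalue `c ^ k * μ`. -/
lemma chain {n : ℕ} {X M : Matrix (Fin n) (Fin n) ℂ} {c : ℂ}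
    (h : X * M = c • (M * X)) {v : Fin n → ℂ} {μ : ℂ} (hv : X *ᵥ v = μ • v) :
    ∀ k : ℕ, X *ᵥ (M ^ k *ᵥ v) = (c ^ k * μ) • (M ^ k *ᵥ v) := by
  intro k; induction k with
  | zero => simpa using hv
  | succ k ih =>
    have hstep : M ^ (k + 1) *ᵥ v = M *ᵥ (M ^ k *ᵥ v) := by
      rw [Matrix.mulVec_mulVec, ← pow_succ']
    rw [hstep, Matrix.mulVec_mulVec, h, Matrix.smul_mulVec, ← Matrix.mulVec_mulVec, ih,
      Matrix.mulVec_smul, smul_smul, pow_succ']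
    ring_nf

lemma death {n : ℕ} {M : Matrix (Fin n) (Fin n) ℂ} {v : Fin n → ℂ}
    (hv0 : v ≠ 0) (hex : ∃ k, M ^ k *ᵥ v = 0) :
    ∃ k, M ^ k *ᵥ v ≠ 0 ∧ M *ᵥ (M ^ k *ᵥ v) = 0 := by
  classical
  have hk₀ : M ^ (Nat.find hex) *ᵥ v = 0 := Nat.find_spec hex
  have hne : Nat.find hex ≠ 0 := by
    intro h0
    rw [h0, pow_zero, Matrix.one_mulVec] at hk₀
    exact hv0 hk₀
  obtain ⟨k, hk⟩ := Nat.exists_eq_succ_of_ne_zero hne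
  refine ⟨k, ?_, ?_⟩
  · exact Nat.find_min hex (by omega)
  · rw [Matrix.mulVec_mulVec, ← pow_succ']
    have hk1 : k + 1 = Nat.find hex := by omega
    rw [hk1]; exact hk₀

lemma chain_death {n : ℕ} {X M : Matrix (Fin n) (Fin n) ℂ} {c μ : ℂ}
    (h : X * M = c • (M * X)) {v : Fin n → ℂ} (hv0 : v ≠ 0) (hv : X *ᵥ v = μ • v)
    (hinj : Function.Injective fun k : ℕ => c ^ k * μ) :
    ∃ k, M ^ k *ᵥ v ≠ 0 ∧ M *ᵥ (M ^ k *ᵥ v) = 0 := by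
  by_cases hex : ∃ k, M ^ k *ᵥ v = 0
  · exact death hv0 hex
  · push_neg at hex
    exfalso
    have hinf : {μ' : ℂ | ∃ w, w ≠ 0 ∧ X *ᵥ w = μ' • w}.Infinite :=
      Set.infinite_of_injective_forall_mem hinj
        (fun k => ⟨M ^ k *ᵥ v, hex k, chain h hv k⟩)
    exact (spec_finite X).not_infinite hinf

lemma pow_inj_aux {q : ℂ} (hq0 : q ≠ 0) (hq : ∀ m : ℕ, 0 < m → q ^ m ≠ 1) :
    ∀ i j : ℕ, q ^ i = q ^ j → i = j := by
  have key : ∀ i j : ℕ, i < j → q ^ i = q ^ j → False := by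
    intro i j hij hpow
    have h2 : q ^ i * q ^ (j - i) = q ^ i * 1 := by
      rw [mul_one, ← pow_add, Nat.add_sub_cancel' hij.le, hpow]
    exact hq (j - i) (by omega) (mul_left_cancel₀ (pow_ne_zero i hq0) h2)
  intro i j hpow
  rcases lt_trichotomy i j with hl | he | hg
  · exact absurd hpow (fun hh => key i j hl hh)
  · exact he
  · exact absurd hpow.symm (fun hh => key j i hg hh)

lemma pow_mul_inj {q : ℂ} (hq0 : q ≠ 0) (hq : ∀ m : ℕ, 0 < m → q ^ m ≠ 1) {μ : ℂ} (hμ : μ ≠ 0) :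
    Function.Injective fun k : ℕ => q ^ k * μ := by
  intro i j hij
  simp only at hij
  exact pow_inj_aux hq0 hq i j (mul_right_cancel₀ hμ hij)

lemma inv_hyp {q : ℂ} (hq0 : q ≠ 0) (hq : ∀ m : ℕ, 0 < m → q ^ m ≠ 1) :
    q⁻¹ ≠ 0 ∧ ∀ m : ℕ, 0 < m → (q⁻¹) ^ m ≠ 1 := by
  refine ⟨inv_ne_zero hq0, fun m hm => ?_⟩
  rw [inv_pow]
  intro hcon
  exact hq m hm (by rwa [inv_eq_one] at hcon)

lemma sq_hyp {q : ℂ} (hq0 : q ≠ 0) (hq : ∀ m : ℕ, 0 < m → q ^ m ≠ 1) :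
    q ^ 2 ≠ 0 ∧ ∀ m : ℕ, 0 < m → (q ^ 2) ^ m ≠ 1 := by
  refine ⟨pow_ne_zero _ hq0, fun m hm => ?_⟩
  rw [← pow_mul]
  exact hq (2 * m) (by omega)


variable {n : ℕ}

/-- The `(n+1)×(n+1)` matrix `[[c, r], [0, M]]`. -/
def lift (c : ℂ) (r : Fin n → ℂ) (M : Matrix (Fin n) (Fin n) ℂ) :
    Matrix (Fin (n + 1)) (Fin (n + 1)) ℂ :=
  Matrix.of fun i j =>
    Fin.cases (Fin.cases c (fun j' => r j') j) (fun i' => Fin.cases 0 (fun j' => M i' j') j) i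

@[simp] lemma lift_zero_zero (c r M) : lift (n := n) c r M 0 0 = c := rfl

@[simp] lemma lift_zero_succ (c r M) (j : Fin n) : lift (n := n) c r M 0 j.succ = r j := by
  simp [lift]

@[simp] lemma lift_succ_zero (c r M) (i : Fin n) : lift (n := n) c r M i.succ 0 = 0 := by
  simp [lift]

@[simp] lemma lift_succ_succ (c r M) (i j : Fin n) :
    lift (n := n) c r M i.succ j.succ = M i j := by
  simp [lift]

lemma lift_eta (B : Matrix (Fin (n + 1)) (Fin (n + 1)) ℂ)
    (hB : ∀ i : Fin n, B i.succ 0 = 0) :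
    B = lift (B 0 0) (fun j => B 0 j.succ) (B.submatrix Fin.succ Fin.succ) := by
  ext i j
  induction i using Fin.cases with
  | zero =>
    induction j using Fin.cases with
    | zero => simp
    | succ j' => simp
  | succ i' =>
    induction j using Fin.cases with
    | zero => simp [hB]
    | succ j' => simp

lemma lift_mul (c₁ c₂ : ℂ) (r₁ r₂ : Fin n → ℂ) (M N : Matrix (Fin n) (Fin n) ℂ) :
    lift c₁ r₁ M * lift c₂ r₂ N =
      lift (c₁ * c₂) (fun j => c₁ * r₂ j + ∑ k, r₁ k * N k j) (M * N) := by
  ext i j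
  rw [Matrix.mul_apply]
  induction i using Fin.cases with
  | zero =>
    induction j using Fin.cases with
    | zero => rw [Fin.sum_univ_succ]; simp
    | succ j' => rw [Fin.sum_univ_succ]; simp
  | succ i' =>
    induction j using Fin.cases with
    | zero => rw [Fin.sum_univ_succ]; simp
    | succ j' => rw [Fin.sum_univ_succ]; simp [Matrix.mul_apply]

lemma lift_smul (a c : ℂ) (r : Fin n → ℂ) (M : Matrix (Fin n) (Fin n) ℂ) :
    a • lift c r M = lift (a * c) (a • r) (a • M) := by
  ext i j
  induction i using Fin.cases with
  | zero =>
    induction j using Fin.cases with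
    | zero => simp
    | succ j' => simp
  | succ i' =>
    induction j using Fin.cases with
    | zero => simp
    | succ j' => simp

lemma lift_sub (c₁ c₂ : ℂ) (r₁ r₂ : Fin n → ℂ) (M N : Matrix (Fin n) (Fin n) ℂ) :
    lift c₁ r₁ M - lift c₂ r₂ N = lift (c₁ - c₂) (r₁ - r₂) (M - N) := by
  ext i j
  induction i using Fin.cases with
  | zero =>
    induction j using Fin.cases with
    | zero => simp
    | succ j' => simp
  | succ i' =>
    induction j using Fin.cases with
    | zero => simp
    | succ j' => simp

lemma lift_one : lift (n := n) 1 0 1 = 1 := by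
  ext i j
  induction i using Fin.cases with
  | zero =>
    induction j using Fin.cases with
    | zero => simp
    | succ j' => simp [Matrix.one_apply, (Fin.succ_ne_zero j').symm]
  | succ i' =>
    induction j using Fin.cases with
    | zero => simp [Matrix.one_apply, Fin.succ_ne_zero i']
    | succ j' => simp [Matrix.one_apply, Fin.succ_inj]

@[simp] lemma lift_submatrix (c : ℂ) (r : Fin n → ℂ) (M : Matrix (Fin n) (Fin n) ℂ) :
    (lift c r M).submatrix Fin.succ Fin.succ = M := by
  ext i j
  simp

lemma lift_det (c : ℂ) (r : Fin n → ℂ) (M : Matrix (Fin n) (Fin n) ℂ) :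
    (lift c r M).det = c * M.det := by
  rw [Matrix.det_succ_column_zero, Fin.sum_univ_succ]
  simp [Fin.succAbove_zero]

lemma lift_blockTriangular (c : ℂ) (r : Fin n → ℂ) {M : Matrix (Fin n) (Fin n) ℂ}
    (h : M.BlockTriangular id) : (lift c r M).BlockTriangular id := by
  intro i j hij
  obtain rfl | ⟨i', rfl⟩ := Fin.eq_zero_or_eq_succ i
  · exact absurd hij (Fin.not_lt_zero _)
  · obtain rfl | ⟨j', rfl⟩ := Fin.eq_zero_or_eq_succ j
    · simp
    · rw [lift_succ_succ]
      exact h (by simpa [Fin.succ_lt_succ_iff] using hij)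

lemma lift_diag_mul (M N : Matrix (Fin n) (Fin n) ℂ) :
    lift (1 : ℂ) 0 M * lift 1 0 N = lift 1 0 (M * N) := by
  rw [lift_mul, one_mul]
  have h0 : (fun j => (1 : ℂ) * (0 : Fin n → ℂ) j + ∑ k, (0 : Fin n → ℂ) k * N k j) = 0 := by
    funext j; simp
  rw [h0]


set_option maxHeartbeats 1000000 in
/-- Every representation of `GL_q(2,ℂ)` in dimension `n+1` has a common eigenvector which is
killed by the off-diagonal generators. -/
lemma common_eigvec {n : ℕ} {q : ℂ} (hq0 : q ≠ 0) (hq : ∀ m : ℕ, 0 < m → q ^ m ≠ 1)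
    {A₁₁ A₁₂ A₂₁ A₂₂ : Matrix (Fin (n + 1)) (Fin (n + 1)) ℂ}
    (hrep : IsGLqRep q A₁₁ A₁₂ A₂₁ A₂₂) :
    ∃ (w : Fin (n + 1) → ℂ) (a d : ℂ), w ≠ 0 ∧
      A₁₁ *ᵥ w = a • w ∧ A₁₂ *ᵥ w = 0 ∧ A₂₁ *ᵥ w = 0 ∧ A₂₂ *ᵥ w = d • w := by
  classical
  obtain ⟨h1, h2, h3, h4, h5, h6, h7⟩ := hrep
  set C := A₁₂ * A₂₁ with hCdef
  set D := A₁₁ * A₂₂ - q • C with hDdef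
  have hq2ne : (q : ℂ) ^ 2 ≠ 0 := pow_ne_zero _ hq0
  have hA11A22 : A₁₁ * A₂₂ = D + q • C := by rw [hDdef, sub_add_cancel]
  have hA11C : A₁₁ * C = q ^ 2 • (C * A₁₁) := by
    calc A₁₁ * C = (A₁₁ * A₁₂) * A₂₁ := by rw [hCdef, mul_assoc]
    _ = (q • (A₁₂ * A₁₁)) * A₂₁ := by rw [h1]
    _ = q • (A₁₂ * (A₁₁ * A₂₁)) := by rw [Matrix.smul_mul, mul_assoc]
    _ = q • (A₁₂ * (q • (A₂₁ * A₁₁))) := by rw [h2]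
    _ = q ^ 2 • (C * A₁₁) := by
        rw [Matrix.mul_smul, smul_smul, hCdef, ← mul_assoc, sq]
  have hCA22 : C * A₂₂ = q ^ 2 • (A₂₂ * C) := by
    calc C * A₂₂ = A₁₂ * (A₂₁ * A₂₂) := by rw [hCdef, mul_assoc]
    _ = A₁₂ * (q • (A₂₂ * A₂₁)) := by rw [h4]
    _ = q • ((A₁₂ * A₂₂) * A₂₁) := by rw [Matrix.mul_smul, mul_assoc]
    _ = q • ((q • (A₂₂ * A₁₂)) * A₂₁) := by rw [h3]
    _ = q ^ 2 • (A₂₂ * C) := by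
        rw [Matrix.smul_mul, smul_smul, hCdef, mul_assoc, sq]
  have hCA11 : C * A₁₁ = (q ^ 2)⁻¹ • (A₁₁ * C) := by
    rw [hA11C, smul_smul, inv_mul_cancel₀ hq2ne, one_smul]
  have hA22C : A₂₂ * C = (q ^ 2)⁻¹ • (C * A₂₂) := by
    rw [hCA22, smul_smul, inv_mul_cancel₀ hq2ne, one_smul]
  have hA22A11 : A₂₂ * A₁₁ = D + q⁻¹ • C := by
    have h6' : A₂₂ * A₁₁ = A₁₁ * A₂₂ - (q - q⁻¹) • C := by
      rw [← h6]; abel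
    rw [h6', hA11A22, sub_smul]; abel
  have hDA22 : D * A₂₂ = A₂₂ * D := by
    have e1 : A₂₂ * D = D * A₂₂ + q⁻¹ • (C * A₂₂) - q • (A₂₂ * C) := by
      calc A₂₂ * D = (A₂₂ * A₁₁) * A₂₂ - q • (A₂₂ * C) := by
            rw [hDdef, Matrix.mul_sub, mul_assoc, Matrix.mul_smul]
      _ = (D + q⁻¹ • C) * A₂₂ - q • (A₂₂ * C) := by rw [hA22A11]
      _ = D * A₂₂ + q⁻¹ • (C * A₂₂) - q • (A₂₂ * C) := by
            rw [Matrix.add_mul, Matrix.smul_mul]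
    have e2 : q • (A₂₂ * C) = q⁻¹ • (C * A₂₂) := by
      rw [hA22C, smul_smul]
      congr 1
      field_simp
    rw [e1, e2]; abel
  -- C is nilpotent
  have hCnil : IsNilpotent C := by
    apply nilpotent_of_spec_zero
    intro μ v hv0 hv
    by_contra hμ0
    obtain ⟨hqi0, hqi⟩ := inv_hyp (q := q ^ 2) (sq_hyp hq0 hq).1 (sq_hyp hq0 hq).2
    obtain ⟨k₁, hw0, hwkill⟩ := chain_death hCA11 hv0 hv
      (pow_mul_inj hqi0 hqi hμ0)
    set w := A₁₁ ^ k₁ *ᵥ v with hwdef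
    set ν := ((q ^ 2)⁻¹) ^ k₁ * μ with hνdef
    have hν0 : ν ≠ 0 := mul_ne_zero (pow_ne_zero _ hqi0) hμ0
    have hCw : C *ᵥ w = ν • w := chain hCA11 hv k₁
    have hDw : D *ᵥ w = (-(q⁻¹ * ν)) • w := by
      have e1 : (A₂₂ * A₁₁) *ᵥ w = 0 := by
        rw [← Matrix.mulVec_mulVec, hwkill, Matrix.mulVec_zero]
      rw [hA22A11, Matrix.add_mulVec, Matrix.smul_mulVec, hCw] at e1
      have e2 : D *ᵥ w = -(q⁻¹ • ν • w) := by
        rw [eq_neg_of_add_eq_zero_left e1]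
      rw [e2, smul_smul, ← neg_smul]
    obtain ⟨k₂, hz0, hzkill⟩ := chain_death hCA22 hw0 hCw
      (pow_mul_inj (sq_hyp hq0 hq).1 (sq_hyp hq0 hq).2 hν0)
    set z := A₂₂ ^ k₂ *ᵥ w with hzdef
    have hCz : C *ᵥ z = ((q ^ 2) ^ k₂ * ν) • z := chain hCA22 hCw k₂
    have hDA22' : D * A₂₂ = (1 : ℂ) • (A₂₂ * D) := by rw [one_smul, hDA22]
    have hDz : D *ᵥ z = ((1 : ℂ) ^ k₂ * (-(q⁻¹ * ν))) • z := chain hDA22' hDw k₂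
    have e3 : (A₁₁ * A₂₂) *ᵥ z = 0 := by
      rw [← Matrix.mulVec_mulVec, hzkill, Matrix.mulVec_zero]
    rw [hA11A22, Matrix.add_mulVec, hDz, Matrix.smul_mulVec, hCz, smul_smul,
      ← add_smul] at e3
    have hcoef : (1 : ℂ) ^ k₂ * (-(q⁻¹ * ν)) + q * ((q ^ 2) ^ k₂ * ν) = 0 := by
      rcases smul_eq_zero.mp e3 with hc | hc
      · exact hc
      · exact absurd hc hz0
    have hfin : q ^ (2 * k₂ + 2) = 1 := by
      have h8 : q * ((q ^ 2) ^ k₂ * ν) = q⁻¹ * ν := by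
        rw [one_pow] at hcoef
        linear_combination hcoef
      have h9 : q ^ (2 * k₂ + 1) * ν = q⁻¹ * ν := by
        rw [← h8, pow_add, pow_mul, pow_one]
        ring
      have h10 : q ^ (2 * k₂ + 1) = q⁻¹ := mul_right_cancel₀ hν0 h9
      calc q ^ (2 * k₂ + 2) = q ^ (2 * k₂ + 1) * q := by rw [pow_succ]
      _ = q⁻¹ * q := by rw [h10]
      _ = 1 := inv_mul_cancel₀ hq0
    exact hq (2 * k₂ + 2) (by omega) hfin
  -- A₁₁ and A₂₂ are invertible
  have hDC : D * C = C * D := by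
    have hac : (A₁₁ * A₂₂) * C = C * (A₁₁ * A₂₂) := by
      calc (A₁₁ * A₂₂) * C = A₁₁ * (A₂₂ * C) := by rw [mul_assoc]
      _ = (q ^ 2)⁻¹ • ((A₁₁ * C) * A₂₂) := by rw [hA22C, Matrix.mul_smul, ← mul_assoc]
      _ = (q ^ 2)⁻¹ • ((q ^ 2 • (C * A₁₁)) * A₂₂) := by rw [hA11C]
      _ = C * (A₁₁ * A₂₂) := by
          rw [Matrix.smul_mul, smul_smul, inv_mul_cancel₀ hq2ne, one_smul, mul_assoc]
    rw [hDdef, Matrix.sub_mul, Matrix.mul_sub, hac, Matrix.smul_mul, Matrix.mul_smul]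
  have hDunit : IsUnit D := h7
  have hA11A22unit : IsUnit (A₁₁ * A₂₂) := by
    rw [hA11A22]
    refine IsNilpotent.isUnit_add_left_of_commute (hCnil.smul q) hDunit ?_
    show (q • C) * D = D * (q • C)
    rw [Matrix.smul_mul, Matrix.mul_smul, hDC]
  have hA11unit : IsUnit A₁₁ := by
    rw [Matrix.isUnit_iff_isUnit_det]
    have := (Matrix.isUnit_iff_isUnit_det _).mp hA11A22unit
    rw [Matrix.det_mul] at this
    exact isUnit_of_mul_isUnit_left this
  -- A₁₂ and A₂₁ are nilpotent
  have hallne : ∀ (k : ℕ) (v : Fin (n + 1) → ℂ), v ≠ 0 → A₁₁ ^ k *ᵥ v ≠ 0 := by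
    intro k v hv0 hk
    have hu : IsUnit (A₁₁ ^ k).det := (Matrix.isUnit_iff_isUnit_det _).mp (hA11unit.pow k)
    have : v = 0 := by
      have h9 := congrArg (fun x => (A₁₁ ^ k)⁻¹ *ᵥ x) hk
      simpa [Matrix.mulVec_mulVec, Matrix.nonsing_inv_mul _ hu] using h9
    exact hv0 this
  have hA12nil : IsNilpotent A₁₂ := by
    apply nilpotent_of_spec_zero
    intro μ v hv0 hv
    by_contra hμ0
    have hrel : A₁₂ * A₁₁ = q⁻¹ • (A₁₁ * A₁₂) := by
      rw [h1, smul_smul, inv_mul_cancel₀ hq0, one_smul]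
    have hinf : {μ' : ℂ | ∃ w, w ≠ 0 ∧ A₁₂ *ᵥ w = μ' • w}.Infinite :=
      Set.infinite_of_injective_forall_mem
        (pow_mul_inj (inv_hyp hq0 hq).1 (inv_hyp hq0 hq).2 hμ0)
        (fun k => ⟨A₁₁ ^ k *ᵥ v, hallne k v hv0, chain hrel hv k⟩)
    exact (spec_finite A₁₂).not_infinite hinf
  have hA21nil : IsNilpotent A₂₁ := by
    apply nilpotent_of_spec_zero
    intro μ v hv0 hv
    by_contra hμ0
    have hrel : A₂₁ * A₁₁ = q⁻¹ • (A₁₁ * A₂₁) := by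
      rw [h2, smul_smul, inv_mul_cancel₀ hq0, one_smul]
    have hinf : {μ' : ℂ | ∃ w, w ≠ 0 ∧ A₂₁ *ᵥ w = μ' • w}.Infinite :=
      Set.infinite_of_injective_forall_mem
        (pow_mul_inj (inv_hyp hq0 hq).1 (inv_hyp hq0 hq).2 hμ0)
        (fun k => ⟨A₁₁ ^ k *ᵥ v, hallne k v hv0, chain hrel hv k⟩)
    exact (spec_finite A₂₁).not_infinite hinf
  -- a common kernel vector of A₁₂ and A₂₁
  have he0 : (Pi.single 0 1 : Fin (n + 1) → ℂ) ≠ 0 := by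
    intro hcon
    have := congrFun hcon 0
    simp at this
  obtain ⟨N₁, hN₁⟩ := hA12nil
  obtain ⟨a₁, hy0, hykill⟩ := death he0 ⟨N₁, by rw [hN₁, Matrix.zero_mulVec]⟩
  set y := A₁₂ ^ a₁ *ᵥ (Pi.single 0 1) with hydef
  obtain ⟨N₂, hN₂⟩ := hA21nil
  obtain ⟨a₂, hzz0, hzzkill⟩ := death hy0 ⟨N₂, by rw [hN₂, Matrix.zero_mulVec]⟩
  set z := A₂₁ ^ a₂ *ᵥ y with hzdef
  have hz21 : A₂₁ *ᵥ z = 0 := hzzkill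
  have hz12 : A₁₂ *ᵥ z = 0 := by
    have hcomm : A₁₂ * A₂₁ ^ a₂ = A₂₁ ^ a₂ * A₁₂ := (Commute.pow_right h5 a₂)
    rw [hzdef, Matrix.mulVec_mulVec, hcomm, ← Matrix.mulVec_mulVec, hykill,
      Matrix.mulVec_zero]
  -- the invariant subspace of common kernel vectors
  set W : Submodule ℂ (Fin (n + 1) → ℂ) :=
    LinearMap.ker (Matrix.mulVecLin A₁₂) ⊓ LinearMap.ker (Matrix.mulVecLin A₂₁) with hWdef
  have hmemW : ∀ x : Fin (n + 1) → ℂ, x ∈ W ↔ (A₁₂ *ᵥ x = 0 ∧ A₂₁ *ᵥ x = 0) := by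
    intro x
    rw [hWdef, Submodule.mem_inf, LinearMap.mem_ker, LinearMap.mem_ker,
      Matrix.mulVecLin_apply, Matrix.mulVecLin_apply]
  have hzW : z ∈ W := (hmemW z).mpr ⟨hz12, hz21⟩
  have hW11 : ∀ x ∈ W, Matrix.mulVecLin A₁₁ x ∈ W := by
    intro x hx
    obtain ⟨hx1, hx2⟩ := (hmemW x).mp hx
    refine (hmemW _).mpr ⟨?_, ?_⟩
    · rw [Matrix.mulVecLin_apply, Matrix.mulVec_mulVec]
      have hrel : A₁₂ * A₁₁ = q⁻¹ • (A₁₁ * A₁₂) := by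
        rw [h1, smul_smul, inv_mul_cancel₀ hq0, one_smul]
      rw [hrel, Matrix.smul_mulVec, ← Matrix.mulVec_mulVec, hx1,
        Matrix.mulVec_zero, smul_zero]
    · rw [Matrix.mulVecLin_apply, Matrix.mulVec_mulVec]
      have hrel : A₂₁ * A₁₁ = q⁻¹ • (A₁₁ * A₂₁) := by
        rw [h2, smul_smul, inv_mul_cancel₀ hq0, one_smul]
      rw [hrel, Matrix.smul_mulVec, ← Matrix.mulVec_mulVec, hx2,
        Matrix.mulVec_zero, smul_zero]
  haveI : Nontrivial W := by
    refine nontrivial_of_ne (⟨z, hzW⟩ : W) 0 ?_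
    intro hcon
    exact hzz0 (congrArg Subtype.val hcon)
  set f₁ : Module.End ℂ W := (Matrix.mulVecLin A₁₁).restrict hW11 with hf₁def
  obtain ⟨μ₁, hμ₁⟩ := Module.End.exists_eigenvalue f₁
  obtain ⟨v₁, hv₁⟩ := Module.End.HasEigenvalue.exists_hasEigenvector hμ₁
  have hv₁eq : A₁₁ *ᵥ (v₁ : Fin (n + 1) → ℂ) = μ₁ • (v₁ : Fin (n + 1) → ℂ) := by
    have h9 := congrArg Subtype.val hv₁.apply_eq_smul
    rw [hf₁def, LinearMap.restrict_apply] at h9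
    simpa [Matrix.mulVecLin_apply] using h9
  have hv₁ne : (v₁ : Fin (n + 1) → ℂ) ≠ 0 := by
    intro hcon
    exact hv₁.2 (Subtype.ext hcon)
  -- the eigenspace of A₁₁ inside W
  set E : Submodule ℂ (Fin (n + 1) → ℂ) :=
    W ⊓ LinearMap.ker (Matrix.mulVecLin (A₁₁ - μ₁ • 1)) with hEdef
  have hmemE : ∀ x : Fin (n + 1) → ℂ,
      x ∈ E ↔ (x ∈ W ∧ A₁₁ *ᵥ x = μ₁ • x) := by
    intro x
    rw [hEdef, Submodule.mem_inf, LinearMap.mem_ker, Matrix.mulVecLin_apply,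
      Matrix.sub_mulVec, Matrix.smul_mulVec, Matrix.one_mulVec, sub_eq_zero]
  have hv₁E : (v₁ : Fin (n + 1) → ℂ) ∈ E := (hmemE _).mpr ⟨v₁.2, hv₁eq⟩
  have hE22 : ∀ x ∈ E, Matrix.mulVecLin A₂₂ x ∈ E := by
    intro x hx
    obtain ⟨hxW, hx11⟩ := (hmemE x).mp hx
    obtain ⟨hx1, hx2⟩ := (hmemW x).mp hxW
    have hW22 : Matrix.mulVecLin A₂₂ x ∈ W := by
      refine (hmemW _).mpr ⟨?_, ?_⟩
      · rw [Matrix.mulVecLin_apply, Matrix.mulVec_mulVec, h3,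
          Matrix.smul_mulVec, ← Matrix.mulVec_mulVec, hx1,
          Matrix.mulVec_zero, smul_zero]
      · rw [Matrix.mulVecLin_apply, Matrix.mulVec_mulVec, h4,
          Matrix.smul_mulVec, ← Matrix.mulVec_mulVec, hx2,
          Matrix.mulVec_zero, smul_zero]
    refine (hmemE _).mpr ⟨hW22, ?_⟩
    rw [Matrix.mulVecLin_apply, Matrix.mulVec_mulVec]
    have hcx : C *ᵥ x = 0 := by
      rw [hCdef, ← Matrix.mulVec_mulVec, hx2, Matrix.mulVec_zero]
    have h6v : (A₁₁ * A₂₂) *ᵥ x = (A₂₂ * A₁₁) *ᵥ x := by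
      have h9 := congrArg (fun M => M *ᵥ x) h6
      simp only [Matrix.sub_mulVec, Matrix.smul_mulVec] at h9
      rw [hcx, smul_zero, sub_eq_zero] at h9
      exact h9
    rw [h6v, ← Matrix.mulVec_mulVec, hx11, Matrix.mulVec_smul]
  haveI : Nontrivial E := by
    refine nontrivial_of_ne (⟨(v₁ : Fin (n + 1) → ℂ), hv₁E⟩ : E) 0 ?_
    intro hcon
    exact hv₁ne (congrArg Subtype.val hcon)
  set f₂ : Module.End ℂ E := (Matrix.mulVecLin A₂₂).restrict hE22 with hf₂def
  obtain ⟨μ₂, hμ₂⟩ := Module.End.exists_eigenvalue f₂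
  obtain ⟨v₂, hv₂⟩ := Module.End.HasEigenvalue.exists_hasEigenvector hμ₂
  have hv₂eq : A₂₂ *ᵥ (v₂ : Fin (n + 1) → ℂ) = μ₂ • (v₂ : Fin (n + 1) → ℂ) := by
    have h9 := congrArg Subtype.val hv₂.apply_eq_smul
    rw [hf₂def, LinearMap.restrict_apply] at h9
    simpa [Matrix.mulVecLin_apply] using h9
  have hv₂ne : (v₂ : Fin (n + 1) → ℂ) ≠ 0 := fun hcon => hv₂.2 (Subtype.ext hcon)
  obtain ⟨hv₂W, hv₂11⟩ := (hmemE _).mp v₂.2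
  obtain ⟨hv₂12, hv₂21⟩ := (hmemW _).mp hv₂W
  exact ⟨(v₂ : Fin (n + 1) → ℂ), μ₁, μ₂, hv₂ne, hv₂11, hv₂12, hv₂21, hv₂eq⟩


/-- Conjugation preserves the relations. -/
lemma conj_rep {q : ℂ} {A₁₁ A₁₂ A₂₁ A₂₂ P Q : Matrix (Fin n) (Fin n) ℂ}
    (hrep : IsGLqRep q A₁₁ A₁₂ A₂₁ A₂₂) (hPQ : P * Q = 1) (hQP : Q * P = 1) :
    IsGLqRep q (Q * A₁₁ * P) (Q * A₁₂ * P) (Q * A₂₁ * P) (Q * A₂₂ * P) := by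
  obtain ⟨h1, h2, h3, h4, h5, h6, h7⟩ := hrep
  have key : ∀ X Y : Matrix (Fin n) (Fin n) ℂ, (Q * X * P) * (Q * Y * P) = Q * (X * Y) * P := by
    intro X Y
    calc (Q * X * P) * (Q * Y * P) = Q * X * (P * Q) * (Y * P) := by noncomm_ring
    _ = Q * (X * Y) * P := by rw [hPQ]; noncomm_ring
  refine ⟨?_, ?_, ?_, ?_, ?_, ?_, ?_⟩
  · rw [key, key, h1, Matrix.mul_smul, Matrix.smul_mul]
  · rw [key, key, h2, Matrix.mul_smul, Matrix.smul_mul]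
  · rw [key, key, h3, Matrix.mul_smul, Matrix.smul_mul]
  · rw [key, key, h4, Matrix.mul_smul, Matrix.smul_mul]
  · rw [key, key, h5]
  · rw [key, key, key]
    have hsub : Q * (A₁₁ * A₂₂) * P - Q * (A₂₂ * A₁₁) * P
        = Q * ((A₁₁ * A₂₂) - (A₂₂ * A₁₁)) * P := by noncomm_ring
    rw [hsub, h6, Matrix.mul_smul, Matrix.smul_mul]
  · rw [key, key]
    have hsub : Q * (A₁₁ * A₂₂) * P - q • (Q * (A₁₂ * A₂₁) * P)
        = Q * ((A₁₁ * A₂₂) - q • (A₁₂ * A₂₁)) * P := by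
      rw [Matrix.mul_sub, Matrix.sub_mul, Matrix.mul_smul, Matrix.smul_mul]
    rw [hsub, Matrix.isUnit_iff_isUnit_det, Matrix.det_mul, Matrix.det_mul]
    have hdet1 : Q.det * P.det = 1 := by rw [← Matrix.det_mul, hQP, Matrix.det_one]
    have hDdet : IsUnit (A₁₁ * A₂₂ - q • (A₁₂ * A₂₁)).det :=
      (Matrix.isUnit_iff_isUnit_det _).mp h7
    have hre : Q.det * (A₁₁ * A₂₂ - q • (A₁₂ * A₂₁)).det * P.det
        = (A₁₁ * A₂₂ - q • (A₁₂ * A₂₁)).det * (Q.det * P.det) := by ring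
    rw [hre, hdet1, mul_one]
    exact hDdet

theorem glq_aux (q : ℂ) (hq0 : q ≠ 0) (hq : ∀ m : ℕ, 0 < m → q ^ m ≠ 1) :
    ∀ (n : ℕ) (A₁₁ A₁₂ A₂₁ A₂₂ : Matrix (Fin n) (Fin n) ℂ),
      IsGLqRep q A₁₁ A₁₂ A₂₁ A₂₂ →
      ∃ u v : Matrix (Fin n) (Fin n) ℂ, u * v = 1 ∧ v * u = 1 ∧
        (u * A₁₁ * v).BlockTriangular id ∧ (u * A₁₂ * v).BlockTriangular id ∧
        (u * A₂₁ * v).BlockTriangular id ∧ (u * A₂₂ * v).BlockTriangular id := by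
  intro n
  induction n with
  | zero =>
    intro A₁₁ A₁₂ A₂₁ A₂₂ _
    exact ⟨1, 1, mul_one 1, mul_one 1,
      fun i _ _ => i.elim0, fun i _ _ => i.elim0, fun i _ _ => i.elim0, fun i _ _ => i.elim0⟩
  | succ n ih =>
    intro A₁₁ A₁₂ A₂₁ A₂₂ hrep
    obtain ⟨w, a, d, hw0, hw11, hw12, hw21, hw22⟩ := common_eigvec hq0 hq hrep
    -- build the change of basis matrix P with first column w
    obtain ⟨i₀, hi₀⟩ : ∃ i, w i ≠ 0 := by
      by_contra hcon; push_neg at hcon; exact hw0 (funext fun i => hcon i)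
    set P₁ := (1 : Matrix (Fin (n + 1)) (Fin (n + 1)) ℂ).updateCol i₀ w with hP₁def
    have hdetP₁ : P₁.det = w i₀ := by
      have hcr := Matrix.cramer_apply (1 : Matrix (Fin (n + 1)) (Fin (n + 1)) ℂ) w i₀
      rw [Matrix.cramer_one] at hcr
      rw [hP₁def, ← hcr]
      rfl
    set σ : Equiv.Perm (Fin (n + 1)) := Equiv.swap 0 i₀ with hσdef
    set P := P₁.submatrix id σ with hPdef
    have hdetP : IsUnit P.det := by
      rw [hPdef, Matrix.det_permute' σ P₁, hdetP₁]
      refine IsUnit.mul ?_ (Ne.isUnit hi₀)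
      rcases Int.units_eq_one_or (Equiv.Perm.sign σ) with hs | hs <;> rw [hs] <;> simp
    have hcolP : ∀ i, P i 0 = w i := by
      intro i
      rw [hPdef, Matrix.submatrix_apply, id, hσdef, Equiv.swap_apply_left, hP₁def,
        Matrix.updateCol_self]
    set Q := P⁻¹ with hQdef
    have hPQ : P * Q = 1 := Matrix.mul_nonsing_inv P hdetP
    have hQP : Q * P = 1 := Matrix.nonsing_inv_mul P hdetP
    have hPe : P *ᵥ Pi.single 0 1 = w := by
      rw [Matrix.mulVec_single_one]
      funext i
      change P i 0 = w i
      exact hcolP i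
    -- the conjugated representation
    have hrep' := conj_rep hrep hPQ hQP
    have hcol : ∀ (A : Matrix (Fin (n + 1)) (Fin (n + 1)) ℂ) (α : ℂ), A *ᵥ w = α • w →
        ∀ i : Fin n, (Q * A * P) i.succ 0 = 0 := by
      intro A α hA i
      have hv : (Q * A * P) *ᵥ Pi.single 0 1 = α • (Pi.single 0 1 : Fin (n + 1) → ℂ) := by
        have e1 : (Q * A * P) *ᵥ (Pi.single 0 1 : Fin (n + 1) → ℂ)
            = Q *ᵥ (A *ᵥ (P *ᵥ Pi.single 0 1)) := by
          rw [Matrix.mulVec_mulVec, Matrix.mulVec_mulVec]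
        rw [e1, hPe, hA, Matrix.mulVec_smul, ← hPe, Matrix.mulVec_mulVec, hQP,
          Matrix.one_mulVec]
      have e2 := congrFun hv i.succ
      rw [Matrix.mulVec_single_one] at e2
      have e3 : (Q * A * P) i.succ 0 = (Q * A * P).col 0 i.succ := rfl
      rw [e3, e2]
      simp [Pi.single_eq_of_ne (Fin.succ_ne_zero i)]
    have hcol0 : ∀ (A : Matrix (Fin (n + 1)) (Fin (n + 1)) ℂ), A *ᵥ w = 0 →
        ∀ i : Fin n, (Q * A * P) i.succ 0 = 0 := by
      intro A hA i
      exact hcol A 0 (by rw [hA, zero_smul]) i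
    -- write the four conjugated matrices in lift form
    set B₁₁ := Q * A₁₁ * P with hB11
    set B₁₂ := Q * A₁₂ * P with hB12
    set B₂₁ := Q * A₂₁ * P with hB21
    set B₂₂ := Q * A₂₂ * P with hB22
    set M₁₁ := B₁₁.submatrix Fin.succ Fin.succ with hM11
    set M₁₂ := B₁₂.submatrix Fin.succ Fin.succ with hM12
    set M₂₁ := B₂₁.submatrix Fin.succ Fin.succ with hM21
    set M₂₂ := B₂₂.submatrix Fin.succ Fin.succ with hM22
    have hB11eta : B₁₁ = lift (B₁₁ 0 0) (fun j => B₁₁ 0 j.succ) M₁₁ :=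
      lift_eta B₁₁ (hcol A₁₁ a hw11)
    have hB12eta : B₁₂ = lift (B₁₂ 0 0) (fun j => B₁₂ 0 j.succ) M₁₂ :=
      lift_eta B₁₂ (hcol0 A₁₂ hw12)
    have hB21eta : B₂₁ = lift (B₂₁ 0 0) (fun j => B₂₁ 0 j.succ) M₂₁ :=
      lift_eta B₂₁ (hcol0 A₂₁ hw21)
    have hB22eta : B₂₂ = lift (B₂₂ 0 0) (fun j => B₂₂ 0 j.succ) M₂₂ :=
      lift_eta B₂₂ (hcol A₂₂ d hw22)
    obtain ⟨g1, g2, g3, g4, g5, g6, g7⟩ := hrep'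
    -- transfer the relations to the submatrices
    have sub_of : ∀ {X Y : Matrix (Fin (n + 1)) (Fin (n + 1)) ℂ}, X = Y →
        X.submatrix Fin.succ Fin.succ = Y.submatrix Fin.succ Fin.succ := by
      intro X Y hXY; rw [hXY]
    have m1 : M₁₁ * M₁₂ = q • (M₁₂ * M₁₁) := by
      have h := g1
      rw [hB11eta, hB12eta, lift_mul, lift_mul, lift_smul] at h
      have h' := sub_of h
      rwa [lift_submatrix, lift_submatrix] at h'
    have m2 : M₁₁ * M₂₁ = q • (M₂₁ * M₁₁) := by
      have h := g2
      rw [hB11eta, hB21eta, lift_mul, lift_mul, lift_smul] at h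
      have h' := sub_of h
      rwa [lift_submatrix, lift_submatrix] at h'
    have m3 : M₁₂ * M₂₂ = q • (M₂₂ * M₁₂) := by
      have h := g3
      rw [hB12eta, hB22eta, lift_mul, lift_mul, lift_smul] at h
      have h' := sub_of h
      rwa [lift_submatrix, lift_submatrix] at h'
    have m4 : M₂₁ * M₂₂ = q • (M₂₂ * M₂₁) := by
      have h := g4
      rw [hB21eta, hB22eta, lift_mul, lift_mul, lift_smul] at h
      have h' := sub_of h
      rwa [lift_submatrix, lift_submatrix] at h'
    have m5 : M₁₂ * M₂₁ = M₂₁ * M₁₂ := by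
      have h := g5
      rw [hB12eta, hB21eta, lift_mul, lift_mul] at h
      have h' := sub_of h
      rwa [lift_submatrix, lift_submatrix] at h'
    have m6 : M₁₁ * M₂₂ - M₂₂ * M₁₁ = (q - q⁻¹) • (M₁₂ * M₂₁) := by
      have h := g6
      rw [hB11eta, hB22eta, hB12eta, hB21eta, lift_mul, lift_mul, lift_mul, lift_sub,
        lift_smul] at h
      have h' := sub_of h
      rwa [lift_submatrix, lift_submatrix] at h'
    have m7 : IsUnit (M₁₁ * M₂₂ - q • (M₁₂ * M₂₁)) := by
      have h := g7
      rw [hB11eta, hB22eta, hB12eta, hB21eta, lift_mul, lift_mul, lift_smul, lift_sub,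
        Matrix.isUnit_iff_isUnit_det, lift_det] at h
      exact (Matrix.isUnit_iff_isUnit_det _).mpr (isUnit_of_mul_isUnit_right h)
    obtain ⟨u', v', huv, hvu, t11, t12, t21, t22⟩ :=
      ih M₁₁ M₁₂ M₂₁ M₂₂ ⟨m1, m2, m3, m4, m5, m6, m7⟩
    refine ⟨lift 1 0 u' * Q, P * lift 1 0 v', ?_, ?_, ?_, ?_, ?_, ?_⟩
    · have e : lift (n := n) 1 0 u' * Q * (P * lift 1 0 v')
          = lift 1 0 u' * (Q * P) * lift 1 0 v' := by noncomm_ring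
      rw [e, hQP, mul_one, lift_diag_mul, huv, lift_one]
    · have e : P * lift (n := n) 1 0 v' * (lift 1 0 u' * Q)
          = P * (lift 1 0 v' * lift 1 0 u') * Q := by noncomm_ring
      rw [e, lift_diag_mul, hvu, lift_one, mul_one, hPQ]
    all_goals {
      first
      | (have e : lift (n := n) 1 0 u' * Q * A₁₁ * (P * lift 1 0 v')
            = lift 1 0 u' * B₁₁ * lift 1 0 v' := by rw [hB11]; noncomm_ring
         rw [e, hB11eta, lift_mul, lift_mul]
         exact lift_blockTriangular _ _ t11)
      | (have e : lift (n := n) 1 0 u' * Q * A₁₂ * (P * lift 1 0 v')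
            = lift 1 0 u' * B₁₂ * lift 1 0 v' := by rw [hB12]; noncomm_ring
         rw [e, hB12eta, lift_mul, lift_mul]
         exact lift_blockTriangular _ _ t12)
      | (have e : lift (n := n) 1 0 u' * Q * A₂₁ * (P * lift 1 0 v')
            = lift 1 0 u' * B₂₁ * lift 1 0 v' := by rw [hB21]; noncomm_ring
         rw [e, hB21eta, lift_mul, lift_mul]
         exact lift_blockTriangular _ _ t21)
      | (have e : lift (n := n) 1 0 u' * Q * A₂₂ * (P * lift 1 0 v')
            = lift 1 0 u' * B₂₂ * lift 1 0 v' := by rw [hB22]; noncomm_ring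
         rw [e, hB22eta, lift_mul, lift_mul]
         exact lift_blockTriangular _ _ t22)
    }


end GLqAux

/-- every finite dimensional representation of `GL_q(2,ℂ)`,
`q^m ≠ 1`, is simultaneously triangularizable. -/
theorem glq_rep_triangularizable {n : ℕ} (q : ℂ) (hq0 : q ≠ 0)
    (hq : ∀ m : ℕ, 0 < m → q ^ m ≠ 1)
    (A₁₁ A₁₂ A₂₁ A₂₂ : Matrix (Fin n) (Fin n) ℂ)
    (hrep : IsGLqRep q A₁₁ A₁₂ A₂₁ A₂₂) :
    ∃ u v : Matrix (Fin n) (Fin n) ℂ, u * v = 1 ∧ v * u = 1 ∧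
      (u * A₁₁ * v).BlockTriangular id ∧ (u * A₁₂ * v).BlockTriangular id ∧
      (u * A₂₁ * v).BlockTriangular id ∧ (u * A₂₂ * v).BlockTriangular id :=
  GLqAux.glq_aux q hq0 hq n A₁₁ A₁₂ A₂₁ A₂₂ hrep
end

section
/- Let q ∈ ℂ with q ≠ 0 and q^m ≠ 1 for every positive integer m. For every representation of GL_q(2,ℂ) by n×n complex matrices A₁₁, A₁₂, A₂₁, A₂₂, the matrices A₁₁ and A₂₂ are invertible, while A₁₂ and A₂₁ are nilpotent. -/
open Polynomial

theorem Multiset.sum_map_eval_eq_zero_of_sum_map_pow_eq_zero {R : Type*} [CommSemiring R]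
    {s : Multiset R} (hs : ∀ k, 0 < k → (s.map (· ^ k)).sum = 0) {p : R[X]}
    (hp : p.coeff 0 = 0) : (s.map p.eval).sum = 0 := by
  simp_rw [eval_eq_sum_range, Multiset.sum_map_sum, Multiset.sum_map_mul_left]
  refine Finset.sum_eq_zero fun k _ => ?_
  rcases k.eq_zero_or_pos with rfl | hk
  · rw [hp, zero_mul]
  · rw [hs k hk, mul_zero]

theorem Multiset.eq_zero_of_sum_map_pow_eq_zero {R : Type*} [CommRing R] [IsDomain R]
    [CharZero R] {s : Multiset R} (hs : ∀ k, 0 < k → (s.map (· ^ k)).sum = 0) {x : R}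
    (hx : x ∈ s) : x = 0 := by
  classical
  -- `p` vanishes at `0` and on `s` except at `x`, so the power sums of `s` only see `p x`
  let p : R[X] := X * ∏ t ∈ s.toFinset.erase x, (X - C t)
  have hpx : s.count x • p.eval x = 0 := by
    rw [← Multiset.sum_map_eq_nsmul_single (f := p.eval) x,
      Multiset.sum_map_eval_eq_zero_of_sum_map_pow_eq_zero hs]
    · simp [p]
    · intro t htx hts
      simp only [p, eval_mul, eval_X, eval_prod, eval_sub, eval_C]
      exact mul_eq_zero_of_right _ (Finset.prod_eq_zero (by simp [htx, hts]) (sub_self t))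
  by_contra hx0
  have hcount : (s.count x : R) ≠ 0 := Nat.cast_ne_zero.mpr (Multiset.count_ne_zero.mpr hx)
  simp [p, eval_prod, nsmul_eq_mul, hx0, hcount, sub_eq_zero, Finset.prod_eq_zero_iff] at hpx

section QCommute

variable {K R : Type*} [CommSemiring K] [Semiring R] [Algebra K R] {a b c : R} {q r : K}

theorem mul_pow_eq_smul_pow_mul (h : a * b = q • (b * a)) (k : ℕ) :
    a * b ^ k = q ^ k • (b ^ k * a) := by
  induction k with
  | zero => simp
  | succ k ih =>
    rw [pow_succ, ← mul_assoc, ih, smul_mul_assoc, mul_assoc, h, mul_smul_comm, smul_smul,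
      ← mul_assoc, ← pow_succ, ← pow_succ]

theorem mul_mul_eq_smul_mul_mul (hb : a * b = q • (b * a)) (hc : a * c = r • (c * a)) :
    a * (b * c) = (q * r) • (b * c * a) := by
  rw [← mul_assoc, hb, smul_mul_assoc, mul_assoc, hc, mul_smul_comm, smul_smul, mul_assoc]

theorem mul_mul_eq_smul_mul_mul' (hb : b * a = q • (a * b)) (hc : c * a = r • (a * c)) :
    b * c * a = (q * r) • (a * (b * c)) := by
  rw [mul_assoc, hc, mul_smul_comm, ← mul_assoc, hb, smul_mul_assoc, smul_smul, mul_assoc,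
    mul_comm r]

end QCommute

namespace Matrix

variable {n K : Type*} [Fintype n] [DecidableEq n] [Field K]

theorem trace_mul_mul_of_mul_eq_smul {A X : Matrix n n K} {c : K} (h : A * X = c • (X * A))
    (B : Matrix n n K) : (B * A * X).trace = c * (A * B * X).trace := by
  rw [mul_assoc, h, mul_smul_comm, trace_smul, smul_eq_mul, ← mul_assoc, trace_mul_cycle]

section Recursion

variable {q : K} {A B D N : Matrix n n K}

theorem trace_pow_mul_pow_recursion (hAB : A * B = D + q • N) (hBA : B * A = D + q⁻¹ • N)
    (hAD : Commute A D) (hDN : Commute D N) (hAN : A * N = q ^ 2 • (N * A)) (a j : ℕ) :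
    (q⁻¹ - q ^ (2 * j + 1)) * (D ^ a * N ^ (j + 1)).trace
      = (q ^ (2 * j) - 1) * (D ^ (a + 1) * N ^ j).trace := by
  have hAX : A * (D ^ a * N ^ j) = q ^ (2 * j) • (D ^ a * N ^ j * A) := by
    rw [← mul_assoc, (hAD.pow_right a).eq, mul_assoc, mul_pow_eq_smul_pow_mul hAN j, ← pow_mul,
      mul_smul_comm, mul_assoc]
  have hNX : N * (D ^ a * N ^ j) = D ^ a * N ^ (j + 1) := by
    rw [← mul_assoc, ← (hDN.pow_left a).eq, mul_assoc, ← pow_succ']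
  have key := trace_mul_mul_of_mul_eq_smul hAX B
  simp only [hBA, hAB, add_mul, smul_mul_assoc, trace_add, trace_smul, smul_eq_mul, hNX] at key
  rw [← mul_assoc D, ← pow_succ'] at key
  linear_combination key

theorem trace_pow_mul_pow_succ_eq_zero (hq0 : q ≠ 0) (hq : ∀ m, 0 < m → q ^ m ≠ 1)
    (hAB : A * B = D + q • N) (hBA : B * A = D + q⁻¹ • N) (hAD : Commute A D)
    (hDN : Commute D N) (hAN : A * N = q ^ 2 • (N * A)) (j a : ℕ) :
    (D ^ a * N ^ (j + 1)).trace = 0 := by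
  have hcoeff (j : ℕ) : q⁻¹ - q ^ (2 * j + 1) ≠ 0 := by
    intro h
    refine hq (2 * j + 2) (by omega) (sub_eq_zero.mp ?_).symm
    rw [pow_succ' q (2 * j + 1), ← mul_inv_cancel₀ hq0, ← mul_sub, h, mul_zero]
  induction j generalizing a with
  | zero =>
    refine (mul_eq_zero.mp ?_).resolve_left (hcoeff 0)
    rw [trace_pow_mul_pow_recursion hAB hBA hAD hDN hAN]
    simp
  | succ j ih =>
    refine (mul_eq_zero.mp ?_).resolve_left (hcoeff (j + 1))
    rw [trace_pow_mul_pow_recursion hAB hBA hAD hDN hAN, ih, mul_zero]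

end Recursion

section IsAlgClosed

variable [IsAlgClosed K]

theorem card_roots_charpoly (M : Matrix n n K) : M.charpoly.roots.card = Fintype.card n := by
  rw [IsAlgClosed.card_roots_eq_natDegree, charpoly_natDegree_eq_dim]

theorem det_sub_scalar (M : Matrix n n K) (r : K) :
    (M - scalar n r).det = (M.charpoly.roots.map (· - r)).prod := by
  have hsplit := (IsAlgClosed.splits M.charpoly).eq_prod_roots_of_monic M.charpoly_monic
  calc (M - scalar n r).det = (-1) ^ Fintype.card n * M.charpoly.eval r := by
        rw [eval_charpoly, ← det_neg, neg_sub]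
    _ = (M.charpoly.roots.map (· - r)).prod := by
        rw [hsplit, eval_multiset_prod, Multiset.map_map, roots_multiset_prod_X_sub_C,
          ← card_roots_charpoly M, ← Multiset.prod_replicate, ← Multiset.map_const',
          ← Multiset.prod_map_mul]
        simp

theorem det_aeval (M : Matrix n n K) (p : K[X]) :
    (aeval M p).det = (M.charpoly.roots.map p.eval).prod := by
  have hp := C_leadingCoeff_mul_prod_multiset_X_sub_C (IsAlgClosed.card_roots_eq_natDegree (p := p))
  set c := p.leadingCoeff
  set s := p.roots
  -- `Multiset.prod` needs commutativity, so factor `p` through the monoid hom `det ∘ aeval M`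
  let detAeval : K[X] →* K := detMonoidHom.comp (aeval (R := K) M).toMonoidHom
  calc (aeval M p).det = detAeval p := rfl
    _ = c ^ Fintype.card n * (s.map fun r => (M.charpoly.roots.map (· - r)).prod).prod := by
        rw [← hp, map_mul, map_multiset_prod, Multiset.map_map]
        congr 1
        · simp [detAeval, algebraMap_eq_diagonal]
        · congr 1
          refine Multiset.map_congr rfl fun r _ => ?_
          simp [detAeval, ← det_sub_scalar, scalar_apply, algebraMap_eq_diagonal,
            Pi.algebraMap_def]
    _ = (M.charpoly.roots.map p.eval).prod := by
        rw [Multiset.prod_map_prod_map, ← card_roots_charpoly M, ← Multiset.prod_replicate,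
          ← Multiset.map_const', ← Multiset.prod_map_mul]
        conv_rhs => rw [← hp]
        simp [eval_multiset_prod]

theorem charpoly_aeval (M : Matrix n n K) (p : K[X]) :
    (aeval M p).charpoly = ((M.charpoly.roots.map p.eval).map fun μ => X - C μ).prod := by
  refine Polynomial.funext fun a => ?_
  have hscalar : scalar n a - aeval M p = aeval M (C a - p) := by
    simp [scalar_apply, algebraMap_eq_diagonal]
  rw [eval_charpoly, hscalar, det_aeval, eval_multiset_prod, Multiset.map_map, Multiset.map_map]
  simp

theorem trace_aeval (M : Matrix n n K) (p : K[X]) :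
    (aeval M p).trace = (M.charpoly.roots.map p.eval).sum := by
  rw [trace_eq_sum_roots_charpoly, charpoly_aeval, roots_multiset_prod_X_sub_C]

theorem trace_pow_eq_sum_roots_charpoly (M : Matrix n n K) (k : ℕ) :
    (M ^ k).trace = (M.charpoly.roots.map (· ^ k)).sum := by
  simpa using trace_aeval M (X ^ k)

variable [CharZero K]

theorem isNilpotent_of_trace_pow_eq_zero {M : Matrix n n K}
    (h : ∀ k, 0 < k → (M ^ k).trace = 0) : IsNilpotent M := by
  have hroots : M.charpoly.roots = Multiset.replicate (Fintype.card n) 0 :=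
    Multiset.eq_replicate.mpr ⟨card_roots_charpoly M, fun μ hμ =>
      Multiset.eq_zero_of_sum_map_pow_eq_zero
        (fun k hk => by rw [← trace_pow_eq_sum_roots_charpoly, h k hk]) hμ⟩
  have hcharpoly : M.charpoly = X ^ Fintype.card n := by
    rw [(IsAlgClosed.splits _).eq_prod_roots_of_monic M.charpoly_monic, hroots]
    simp
  exact ⟨Fintype.card n, by simpa [hcharpoly] using M.aeval_self_charpoly⟩

theorem isNilpotent_of_isUnit_of_mul_eq_smul_mul {A B : Matrix n n K} {q : K} (hA : IsUnit A)
    (h : A * B = q • (B * A)) (hq : ∀ k, 0 < k → q ^ k ≠ 1) : IsNilpotent B := by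
  refine isNilpotent_of_trace_pow_eq_zero fun k hk => ?_
  obtain ⟨u, rfl⟩ := hA
  have hconj := trace_mul_mul_of_mul_eq_smul (mul_pow_eq_smul_pow_mul h k) ↑u⁻¹
  simp only [Units.inv_mul, Units.mul_inv, one_mul] at hconj
  have htrace : (q ^ k - 1) * (B ^ k).trace = 0 := by linear_combination -hconj
  exact (mul_eq_zero.mp htrace).resolve_left (sub_ne_zero.mpr (hq k hk))

theorem isNilpotent_of_mul_eq_add_smul {q : K} {A B D N : Matrix n n K} (hq0 : q ≠ 0)
    (hq : ∀ m, 0 < m → q ^ m ≠ 1) (hAB : A * B = D + q • N) (hBA : B * A = D + q⁻¹ • N)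
    (hAD : Commute A D) (hDN : Commute D N) (hAN : A * N = q ^ 2 • (N * A)) :
    IsNilpotent N := by
  refine isNilpotent_of_trace_pow_eq_zero fun k hk => ?_
  obtain ⟨j, rfl⟩ := Nat.exists_eq_add_one_of_ne_zero hk.ne'
  simpa using trace_pow_mul_pow_succ_eq_zero hq0 hq hAB hBA hAD hDN hAN j 0

end IsAlgClosed

end Matrix

namespace IsGLqRep

variable {n : ℕ} {q : ℂ} {A₁₁ A₁₂ A₂₁ A₂₂ : Matrix (Fin n) (Fin n) ℂ}

theorem A₂₂_mul_A₁₁ (h : IsGLqRep q A₁₁ A₁₂ A₂₁ A₂₂) :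
    A₂₂ * A₁₁ = A₁₁ * A₂₂ - q • (A₁₂ * A₂₁) + q⁻¹ • (A₁₂ * A₂₁) := by
  obtain ⟨-, -, -, -, -, hcomm, -⟩ := h
  rw [sub_add, ← sub_smul, ← hcomm, sub_sub_cancel]

theorem A₁₁_mul_A₁₂_mul_A₂₁ (h : IsGLqRep q A₁₁ A₁₂ A₂₁ A₂₂) :
    A₁₁ * (A₁₂ * A₂₁) = q ^ 2 • (A₁₂ * A₂₁ * A₁₁) := by
  obtain ⟨h₁₂, h₂₁, -⟩ := h
  rw [sq]
  exact mul_mul_eq_smul_mul_mul h₁₂ h₂₁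

theorem A₁₂_mul_A₂₁_mul_A₂₂ (h : IsGLqRep q A₁₁ A₁₂ A₂₁ A₂₂) :
    A₁₂ * A₂₁ * A₂₂ = q ^ 2 • (A₂₂ * (A₁₂ * A₂₁)) := by
  obtain ⟨-, -, h₁₂, h₂₁, -⟩ := h
  rw [sq]
  exact mul_mul_eq_smul_mul_mul' h₁₂ h₂₁

theorem commute_A₁₁_qdet (h : IsGLqRep q A₁₁ A₁₂ A₂₁ A₂₂) :
    Commute A₁₁ (A₁₁ * A₂₂ - q • (A₁₂ * A₂₁)) := by
  have hqdet : A₁₁ * A₂₂ - q • (A₁₂ * A₂₁) = A₂₂ * A₁₁ - q⁻¹ • (A₁₂ * A₂₁) := by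
    rw [h.A₂₂_mul_A₁₁, add_sub_cancel_right]
  calc A₁₁ * (A₁₁ * A₂₂ - q • (A₁₂ * A₂₁))
      = A₁₁ * A₂₂ * A₁₁ - (q⁻¹ * q ^ 2) • (A₁₂ * A₂₁ * A₁₁) := by
        rw [hqdet, mul_sub, mul_smul_comm, h.A₁₁_mul_A₁₂_mul_A₂₁, smul_smul, mul_assoc A₁₁ A₂₂]
    _ = (A₁₁ * A₂₂ - q • (A₁₂ * A₂₁)) * A₁₁ := by
        rw [sq, ← mul_assoc, inv_mul_mul_self, sub_mul, smul_mul_assoc]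

theorem commute_qdet_A₁₂_mul_A₂₁ (h : IsGLqRep q A₁₁ A₁₂ A₂₁ A₂₂) (hq0 : q ≠ 0) :
    Commute (A₁₁ * A₂₂ - q • (A₁₂ * A₂₁)) (A₁₂ * A₂₁) := by
  have hcomm : Commute (A₁₁ * A₂₂) (A₁₂ * A₂₁) := by
    refine smul_right_injective _ (pow_ne_zero 2 hq0) ?_
    calc q ^ 2 • (A₁₁ * A₂₂ * (A₁₂ * A₂₁)) = A₁₁ * (A₁₂ * A₂₁ * A₂₂) := by
          rw [h.A₁₂_mul_A₂₁_mul_A₂₂, mul_smul_comm, mul_assoc]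
      _ = q ^ 2 • (A₁₂ * A₂₁ * (A₁₁ * A₂₂)) := by
          rw [← mul_assoc, h.A₁₁_mul_A₁₂_mul_A₂₁, smul_mul_assoc, mul_assoc]
  exact hcomm.sub_left ((Commute.refl _).smul_left q)

theorem isNilpotent_A₁₂_mul_A₂₁ (h : IsGLqRep q A₁₁ A₁₂ A₂₁ A₂₂) (hq0 : q ≠ 0)
    (hq : ∀ m, 0 < m → q ^ m ≠ 1) : IsNilpotent (A₁₂ * A₂₁) :=
  Matrix.isNilpotent_of_mul_eq_add_smul hq0 hq (sub_add_cancel _ _).symm h.A₂₂_mul_A₁₁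
    h.commute_A₁₁_qdet (h.commute_qdet_A₁₂_mul_A₂₁ hq0) h.A₁₁_mul_A₁₂_mul_A₂₁

theorem isUnit_A₁₁_mul_A₂₂ (h : IsGLqRep q A₁₁ A₁₂ A₂₁ A₂₂) (hq0 : q ≠ 0)
    (hq : ∀ m, 0 < m → q ^ m ≠ 1) : IsUnit (A₁₁ * A₂₂) := by
  have hnil := (h.isNilpotent_A₁₂_mul_A₂₁ hq0 hq).smul q
  have hcomm := (h.commute_qdet_A₁₂_mul_A₂₁ hq0).symm.smul_left q
  obtain ⟨-, -, -, -, -, -, hqdet⟩ := h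
  rw [← sub_add_cancel (A₁₁ * A₂₂) (q • (A₁₂ * A₂₁)), add_comm]
  exact hnil.isUnit_add_right_of_commute hqdet hcomm

end IsGLqRep

/-- in every finite dimensional representation of `GL_q(2,ℂ)`,
`q^m ≠ 1`, the matrices `A₁₁`, `A₂₂` are invertible and `A₁₂`, `A₂₁` are
nilpotent. -/
theorem glq_rep_diagonal_invertible_offdiagonal_nilpotent {n : ℕ} (q : ℂ) (hq0 : q ≠ 0)
    (hq : ∀ m : ℕ, 0 < m → q ^ m ≠ 1)
    (A₁₁ A₁₂ A₂₁ A₂₂ : Matrix (Fin n) (Fin n) ℂ)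
    (hrep : IsGLqRep q A₁₁ A₁₂ A₂₁ A₂₂) :
    IsUnit A₁₁ ∧ IsUnit A₂₂ ∧ IsNilpotent A₁₂ ∧ IsNilpotent A₂₁ := by
  have hunit := hrep.isUnit_A₁₁_mul_A₂₂ hq0 hq
  have hA₁₁ : IsUnit A₁₁ := isUnit_of_mul_isUnit_left hunit
  obtain ⟨h₁₂, h₂₁, -⟩ := hrep
  exact ⟨hA₁₁, isUnit_of_mul_isUnit_right hunit,
    Matrix.isNilpotent_of_isUnit_of_mul_eq_smul_mul hA₁₁ h₁₂ hq,
    Matrix.isNilpotent_of_isUnit_of_mul_eq_smul_mul hA₁₁ h₂₁ hq⟩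
end

section
/- Let q ∈ ℂ with q ≠ 0 and q^m ≠ 1 for every positive integer m. Let A₁₁, A₁₂, A₂₁, A₂₂ and A'₁₁, A'₁₂, A'₂₁, A'₂₂ be two representations of GL_q(2,ℂ) by 4×4 complex matrices whose 2×2 block matrices M = (A_ij) and M' = (A'_ij) over M₄(ℂ) are invertible, and let a_ij · v := Σ_k M_{ik} v (M⁻¹)_{kj} and a_ij * v := Σ_k M'_{ik} v (M'⁻¹)_{kj} be the corresponding inner actions on M₄(ℂ). Then the two actions are equivalent, i.e. there exists an invertible u ∈ M₄(ℂ) such that a_ij * (uwu⁻¹) = u(a_ij · w)u⁻¹ for all w ∈ M₄(ℂ) and all i, j ∈ {1,2}, if and only if there exist an invertible u ∈ M₄(ℂ) and nonzero complex numbers α₁, α₂ such that A'₁₁ = uA₁₁u⁻¹·α₁, A'₂₁ = uA₂₁u⁻¹·α₁, A'₁₂ = uA₁₂u⁻¹·α₂ and A'₂₂ = uA₂₂u⁻¹·α₂. -/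
open Matrix

section InnerAction

variable {K R m : Type*} [Fintype m]

section CommSemiring

variable [CommSemiring K] [Semiring R] [Algebra K R]

theorem mul_map_algebraMap_apply (P : Matrix m m R) (D : Matrix m m K) (i j : m) :
    (P * D.map (algebraMap K R)) i j = ∑ k, D k j • P i k := by
  simp [mul_apply, Algebra.smul_def, Algebra.commutes]

variable [DecidableEq m]

variable (K) in
def conjAlgEquiv {u u' : R} (hu : u * u' = 1) (hu' : u' * u = 1) : R ≃ₐ[K] R :=
  MulSemiringAction.toAlgEquiv K R (ConjAct.toConjAct (⟨u, u', hu, hu'⟩ : Rˣ))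

@[simp]
theorem conjAlgEquiv_apply {u u' : R} (hu : u * u' = 1) (hu' : u' * u = 1) (z : R) :
    conjAlgEquiv K hu hu' z = u * z * u' := rfl

theorem conjAlgEquiv_symm {u u' : R} (hu : u * u' = 1) (hu' : u' * u = 1) :
    (conjAlgEquiv K hu hu').symm = conjAlgEquiv K hu' hu := by
  ext z
  rw [AlgEquiv.symm_apply_eq]
  simp only [conjAlgEquiv_apply, ← mul_assoc, hu, one_mul]
  rw [mul_assoc, hu, mul_one]

theorem sum_mul_mul_eq_apply (X Y : Matrix m m R) (w : R) (i j : m) :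
    ∑ k, X i k * w * Y k j = (X * scalar m w * Y) i j := by
  rw [mul_apply]
  simp [scalar_apply]

theorem map_mul_scalar_mul_map (ψ : R ≃ₐ[K] R) (P Q : Matrix m m R) (w : R) :
    P.map ψ.symm * scalar m w * Q.map ψ.symm = (P * scalar m (ψ w) * Q).map ψ.symm := by
  rw [Matrix.map_mul, Matrix.map_mul, scalar_apply, scalar_apply, diagonal_map (map_zero _),
    ψ.symm_apply_apply]

variable (K) in
theorem forall_sum_conj_iff {u u' : R} (hu : u * u' = 1) (hu' : u' * u = 1)
    (P Q P' Q' : Matrix m m R) :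
    (∀ i j w, ∑ k, P' i k * (u * w * u') * Q' k j = u * (∑ k, P i k * w * Q k j) * u') ↔
      ∀ w, P'.map (conjAlgEquiv K hu' hu) * scalar m w * Q'.map (conjAlgEquiv K hu' hu) =
        P * scalar m w * Q := by
  set ψ := conjAlgEquiv K hu hu'
  have hψ : ∀ X : Matrix m m R, X = (X.map ψ).map ψ.symm := fun X => by
    ext
    simp
  simp only [← conjAlgEquiv_symm hu hu', map_mul_scalar_mul_map]
  conv_rhs =>
    intro w
    rw [hψ (P * _ * Q), (Matrix.map_injective ψ.symm.injective).eq_iff, ← Matrix.ext_iff]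
  simp only [sum_mul_mul_eq_apply, map_apply, conjAlgEquiv_apply, ψ]
  exact ⟨fun h w i j => h i j w, fun h i j w => h w i j⟩

theorem commute_scalar_map_algebraMap (D : Matrix m m K) (w : R) :
    Commute (scalar m w) (D.map (algebraMap K R)) := by
  rw [scalar_commute_iff]
  ext i j
  simp [Algebra.commutes]

variable (K) in
theorem exists_eq_map_algebraMap_of_commute_scalar [Algebra.IsCentral K R] {X : Matrix m m R}
    (hX : ∀ w : R, Commute (scalar m w) X) : ∃ D : Matrix m m K, X = D.map (algebraMap K R) := by
  have hcenter : ∀ i j, X i j ∈ Subalgebra.center K R := fun i j =>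
    Subalgebra.mem_center_iff.mpr fun w => by
      simpa using congrFun₂ (scalar_commute_iff.mp (hX w)) i j
  choose D hD using fun i j => (Algebra.IsCentral.mem_center_iff K).mp (hcenter i j)
  exact ⟨D, Matrix.ext hD⟩

theorem commute_scalar_of_sandwich_eq {P Q P' Q' : Matrix m m R} (hQP : Q * P = 1)
    (hQP' : Q' * P' = 1) (h : ∀ w, P' * scalar m w * Q' = P * scalar m w * Q) (w : R) :
    Commute (scalar m w) (Q * P') :=
  calc scalar m w * (Q * P') = Q * (P * scalar m w * Q) * P' := by
        simp only [← mul_assoc, hQP, one_mul]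
    _ = Q * P' * scalar m w := by simp only [← h, mul_assoc, hQP', mul_one]

end CommSemiring

variable [Field K] [Semiring R] [Algebra K R] [DecidableEq m]

variable (K) in
theorem forall_sandwich_eq_iff [Algebra.IsCentral K R] [Nontrivial R] {P Q P' Q' : Matrix m m R}
    (hPQ : P * Q = 1) (hQP : Q * P = 1) (hPQ' : P' * Q' = 1) (hQP' : Q' * P' = 1) :
    (∀ w, P' * scalar m w * Q' = P * scalar m w * Q) ↔
      ∃ D : Matrix m m K, IsUnit D.det ∧ P' = P * D.map (algebraMap K R) := by
  have hmap_one : (1 : Matrix m m K).map (algebraMap K R) = 1 :=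
    Matrix.map_one _ (map_zero _) (map_one _)
  constructor
  · intro h
    obtain ⟨D, hD⟩ := exists_eq_map_algebraMap_of_commute_scalar K
      (commute_scalar_of_sandwich_eq hQP hQP' h)
    obtain ⟨E, hE⟩ := exists_eq_map_algebraMap_of_commute_scalar K
      (commute_scalar_of_sandwich_eq hQP' hQP fun w => (h w).symm)
    have hDE : (D * E).map (algebraMap K R) = (1 : Matrix m m K).map (algebraMap K R) := by
      rw [Matrix.map_mul, ← hD, ← hE, hmap_one]
      calc Q * P' * (Q' * P) = Q * (P' * Q') * P := by simp only [mul_assoc]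
        _ = 1 := by rw [hPQ', mul_one, hQP]
    exact ⟨D, isUnit_det_of_right_inverse (Matrix.map_injective (algebraMap K R).injective hDE),
      by rw [← hD, ← mul_assoc, hPQ, one_mul]⟩
  · rintro ⟨D, hD, rfl⟩ w
    set Dm := D.map (algebraMap K R)
    set Em := D⁻¹.map (algebraMap K R)
    have hDE : Dm * Em = 1 := by rw [← Matrix.map_mul, mul_nonsing_inv D hD, hmap_one]
    have hQ' : Q' = Em * Q :=
      calc Q' = Q' * (P * Dm) * (Em * Q) := by
            rw [mul_assoc, mul_assoc P, ← mul_assoc Dm, hDE, one_mul, hPQ, mul_one]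
        _ = Em * Q := by rw [hQP', one_mul]
    calc P * Dm * scalar m w * Q' = P * (Dm * scalar m w) * Em * Q := by
          rw [hQ']
          simp only [mul_assoc]
      _ = P * scalar m w * Q := by
          rw [← (commute_scalar_map_algebraMap D w).eq]
          simp only [mul_assoc]
          rw [← mul_assoc Dm, hDE, one_mul]

variable (K) in
theorem forall_sum_conj_iff_exists_map_eq_mul [Algebra.IsCentral K R] [Nontrivial R]
    {P Q P' Q' : Matrix m m R} (hPQ : P * Q = 1) (hQP : Q * P = 1) (hPQ' : P' * Q' = 1)
    (hQP' : Q' * P' = 1) {u u' : R} (hu : u * u' = 1) (hu' : u' * u = 1) :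
    (∀ i j w, ∑ k, P' i k * (u * w * u') * Q' k j = u * (∑ k, P i k * w * Q k j) * u') ↔
      ∃ D : Matrix m m K, IsUnit D.det ∧
        P'.map (conjAlgEquiv K hu' hu) = P * D.map (algebraMap K R) := by
  have hmap {X Y : Matrix m m R} (h : X * Y = 1) :
      X.map (conjAlgEquiv K hu' hu) * Y.map (conjAlgEquiv K hu' hu) = 1 := by
    rw [← Matrix.map_mul, h, Matrix.map_one _ (map_zero _) (map_one _)]
  rw [forall_sum_conj_iff K hu hu', forall_sandwich_eq_iff K hPQ hQP (hmap hPQ') (hmap hQP')]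

end InnerAction

section GLq

variable {n : ℕ} {q : ℂ} {A₁₁ A₁₂ A₂₁ A₂₂ : Matrix (Fin n) (Fin n) ℂ}

theorem IsGLqRep.map {n' : ℕ} (hA : IsGLqRep q A₁₁ A₁₂ A₂₁ A₂₂)
    (f : Matrix (Fin n) (Fin n) ℂ →ₐ[ℂ] Matrix (Fin n') (Fin n') ℂ) :
    IsGLqRep q (f A₁₁) (f A₁₂) (f A₂₁) (f A₂₂) := by
  obtain ⟨h₁, h₂, h₃, h₄, h₅, h₆, hD⟩ := hA
  refine ⟨?_, ?_, ?_, ?_, ?_, ?_, ?_⟩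
  · rw [← map_mul, h₁, map_smul, map_mul]
  · rw [← map_mul, h₂, map_smul, map_mul]
  · rw [← map_mul, h₃, map_smul, map_mul]
  · rw [← map_mul, h₄, map_smul, map_mul]
  · rw [← map_mul, h₅, map_mul]
  · rw [← map_mul, ← map_mul, ← map_sub, h₆, map_smul, map_mul]
  · simpa only [map_sub, map_mul, map_smul] using hD.map f

theorem IsGLqRep.combination_qcomm_sub (hq0 : q ≠ 0) (hA : IsGLqRep q A₁₁ A₁₂ A₂₁ A₂₂)
    (a b : ℂ) :
    (a • A₁₁ + b • A₁₂) * (a • A₂₁ + b • A₂₂) -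
        q • ((a • A₂₁ + b • A₂₂) * (a • A₁₁ + b • A₁₂)) =
      (a * b * (1 - q)) • (A₁₁ * A₂₂ - q • (A₁₂ * A₂₁)) := by
  obtain ⟨-, h₂, h₃, -, h₅, h₆, -⟩ := hA
  have h₆' : A₂₂ * A₁₁ = A₁₁ * A₂₂ - (q - q⁻¹) • (A₁₂ * A₂₁) := by rw [← h₆]; abel
  simp only [add_mul, mul_add, smul_mul_smul_comm, smul_add, smul_sub, smul_smul]
  rw [h₂, h₃, ← h₅, h₆']
  match_scalars <;> field_simp <;> ring

theorem IsGLqRep.mul_eq_zero_of_combination_qcomm [NeZero n] (hq0 : q ≠ 0) (hq1 : q ≠ 1)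
    (hA : IsGLqRep q A₁₁ A₁₂ A₂₁ A₂₂) {a b : ℂ}
    (h : (a • A₁₁ + b • A₁₂) * (a • A₂₁ + b • A₂₂) =
      q • ((a • A₂₁ + b • A₂₂) * (a • A₁₁ + b • A₁₂))) :
    a * b = 0 := by
  have hzero := hA.combination_qcomm_sub hq0 a b
  rw [h, sub_self, eq_comm, smul_eq_zero] at hzero
  exact (mul_eq_zero.mp (hzero.resolve_right hA.2.2.2.2.2.2.ne_zero)).resolve_right
    (sub_ne_zero.mpr hq1.symm)

theorem IsGLqRep.not_isGLqRep_swap [NeZero n] (hq0 : q ≠ 0) (hq2 : q ^ 2 ≠ 1)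
    (hA : IsGLqRep q A₁₁ A₁₂ A₂₁ A₂₂) {b c : ℂ} (hb : b ≠ 0) (hc : c ≠ 0) :
    ¬IsGLqRep q (b • A₁₂) (c • A₁₁) (b • A₂₂) (c • A₂₁) := by
  rintro ⟨-, -, -, -, s₅, s₆, -⟩
  obtain ⟨-, -, -, -, h₅, h₆, hD⟩ := hA
  have hqq : q - q⁻¹ ≠ 0 := by
    rw [sub_ne_zero]
    intro h
    apply hq2
    field_simp at h
    linear_combination h
  simp only [smul_mul_smul_comm, mul_comm c b, h₅, sub_self] at s₅ s₆
  have hcomm : A₁₁ * A₂₂ = A₂₂ * A₁₁ := smul_right_injective _ (mul_ne_zero hb hc) s₅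
  have h₁₂₂₁ : A₁₂ * A₂₁ = 0 := by
    rwa [hcomm, sub_self, eq_comm, smul_eq_zero_iff_right hqq] at h₆
  have h₁₁₂₂ : A₁₁ * A₂₂ = 0 := by
    rwa [smul_smul, eq_comm, smul_eq_zero_iff_right (mul_ne_zero hqq (mul_ne_zero hb hc))] at s₆
  exact hD.ne_zero (by rw [h₁₁₂₂, h₁₂₂₁, smul_zero, sub_zero])

theorem IsGLqRep.eq_diagonal_of_mul [NeZero n] (hq0 : q ≠ 0) (hq1 : q ≠ 1) (hq2 : q ^ 2 ≠ 1)
    (hA : IsGLqRep q A₁₁ A₁₂ A₂₁ A₂₂) {D : Matrix (Fin 2) (Fin 2) ℂ} (hD : IsUnit D.det)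
    {B : Matrix (Fin 2) (Fin 2) (Matrix (Fin n) (Fin n) ℂ)}
    (hB : B = !![A₁₁, A₁₂; A₂₁, A₂₂] * D.map (algebraMap ℂ _))
    (hBrep : IsGLqRep q (B 0 0) (B 0 1) (B 1 0) (B 1 1)) :
    ∃ α₁ α₂ : ℂ, α₁ ≠ 0 ∧ α₂ ≠ 0 ∧ D = !![α₁, 0; 0, α₂] := by
  subst hB
  rw [det_fin_two] at hD
  simp only [mul_map_algebraMap_apply, Fin.sum_univ_two, of_apply, cons_val', cons_val_zero,
    cons_val_one, empty_val', cons_val_fin_one] at hBrep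
  have hab := hA.mul_eq_zero_of_combination_qcomm hq0 hq1 hBrep.2.1
  have hcd := hA.mul_eq_zero_of_combination_qcomm hq0 hq1 hBrep.2.2.1
  have hb : D 1 0 = 0 := by
    by_contra hb
    have ha : D 0 0 = 0 := (mul_eq_zero.mp hab).resolve_right hb
    have hc : D 0 1 ≠ 0 := fun hc => hD.ne_zero (by rw [ha, hc]; ring)
    have hd : D 1 1 = 0 := (mul_eq_zero.mp hcd).resolve_left hc
    apply hA.not_isGLqRep_swap hq0 hq2 hb hc
    simpa only [ha, hd, zero_smul, zero_add, add_zero] using hBrep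
  have had : D 0 0 * D 1 1 ≠ 0 := by simpa [hb] using hD.ne_zero
  have hc : D 0 1 = 0 := (mul_eq_zero.mp hcd).resolve_right (right_ne_zero_of_mul had)
  refine ⟨D 0 0, D 1 1, left_ne_zero_of_mul had, right_ne_zero_of_mul had, ?_⟩
  ext i j
  fin_cases i <;> fin_cases j <;> simp [hb, hc]

end GLq

/-- two representations of `GL_q(2,ℂ)` in `M₄(ℂ)` define
equivalent inner actions iff their components are related by a simultaneous
conjugation and column-wise scaling. -/
theorem inner_actions_equivalent_iff (q : ℂ) (hq0 : q ≠ 0)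
    (hq : ∀ m : ℕ, 0 < m → q ^ m ≠ 1)
    (A₁₁ A₁₂ A₂₁ A₂₂ A'₁₁ A'₁₂ A'₂₁ A'₂₂ : Matrix (Fin 4) (Fin 4) ℂ)
    (hrep : IsGLqRep q A₁₁ A₁₂ A₂₁ A₂₂) (hrep' : IsGLqRep q A'₁₁ A'₁₂ A'₂₁ A'₂₂)
    (N N' : Matrix (Fin 2) (Fin 2) (Matrix (Fin 4) (Fin 4) ℂ))
    (hMN : !![A₁₁, A₁₂; A₂₁, A₂₂] * N = 1) (hNM : N * !![A₁₁, A₁₂; A₂₁, A₂₂] = 1)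
    (hMN' : !![A'₁₁, A'₁₂; A'₂₁, A'₂₂] * N' = 1)
    (hNM' : N' * !![A'₁₁, A'₁₂; A'₂₁, A'₂₂] = 1) :
    (∃ u u' : Matrix (Fin 4) (Fin 4) ℂ, u * u' = 1 ∧ u' * u = 1 ∧
        ∀ (i j : Fin 2) (w : Matrix (Fin 4) (Fin 4) ℂ),
          (∑ k, !![A'₁₁, A'₁₂; A'₂₁, A'₂₂] i k * (u * w * u') * N' k j) =
            u * (∑ k, !![A₁₁, A₁₂; A₂₁, A₂₂] i k * w * N k j) * u') ↔
    (∃ (u u' : Matrix (Fin 4) (Fin 4) ℂ) (α₁ α₂ : ℂ),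
        u * u' = 1 ∧ u' * u = 1 ∧ α₁ ≠ 0 ∧ α₂ ≠ 0 ∧
        A'₁₁ = α₁ • (u * A₁₁ * u') ∧ A'₂₁ = α₁ • (u * A₂₁ * u') ∧
        A'₁₂ = α₂ • (u * A₁₂ * u') ∧ A'₂₂ = α₂ • (u * A₂₂ * u')) := by
  have hq1 : q ≠ 1 := by simpa using hq 1 one_pos
  have hq2 : q ^ 2 ≠ 1 := hq 2 two_pos
  have hdiag (α₁ α₂ : ℂ) : !![A₁₁, A₁₂; A₂₁, A₂₂] * !![α₁, 0; 0, α₂].map (algebraMap ℂ _) =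
      !![α₁ • A₁₁, α₂ • A₁₂; α₁ • A₂₁, α₂ • A₂₂] := by
    ext i j
    fin_cases i <;> fin_cases j <;> simp [mul_map_algebraMap_apply]
  constructor
  · rintro ⟨u, u', hu, hu', hact⟩
    rw [forall_sum_conj_iff_exists_map_eq_mul ℂ hMN hNM hMN' hNM' hu hu'] at hact
    obtain ⟨D, hD, hB⟩ := hact
    obtain ⟨α₁, α₂, hα₁, hα₂, rfl⟩ := hrep.eq_diagonal_of_mul hq0 hq1 hq2 hD hB
      (hrep'.map (conjAlgEquiv ℂ hu' hu).toAlgHom)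
    rw [hdiag] at hB
    have entry (i j : Fin 2) : !![A'₁₁, A'₁₂; A'₂₁, A'₂₂] i j =
        u * !![α₁ • A₁₁, α₂ • A₁₂; α₁ • A₂₁, α₂ • A₂₂] i j * u' := by
      rw [← hB, map_apply, ← conjAlgEquiv_apply (K := ℂ) hu hu', ← conjAlgEquiv_symm hu' hu,
        AlgEquiv.symm_apply_apply]
    exact ⟨u, u', α₁, α₂, hu, hu', hα₁, hα₂, by simpa using entry 0 0, by simpa using entry 1 0,
      by simpa using entry 0 1, by simpa using entry 1 1⟩
  · rintro ⟨u, u', α₁, α₂, hu, hu', hα₁, hα₂, rfl, rfl, rfl, rfl⟩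
    refine ⟨u, u', hu, hu', ?_⟩
    rw [forall_sum_conj_iff_exists_map_eq_mul ℂ hMN hNM hMN' hNM' hu hu']
    refine ⟨!![α₁, 0; 0, α₂], by simp [hα₁, hα₂], ?_⟩
    rw [hdiag]
    ext i j
    fin_cases i <;> fin_cases j <;> simp [mul_assoc, hu', ← mul_assoc u' u]
end

section
/- Let q ∈ ℂ with q ≠ 0 and q^m ≠ 1 for every positive integer m. Let A₁₁, A₁₂, A₂₁, A₂₂ and A'₁₁, A'₁₂, A'₂₁, A'₂₂ be two representations of GL_q(2,ℂ) by 4×4 complex matrices whose 2×2 block matrices M = (A_ij) and M' = (A'_ij) over M₄(ℂ) are invertible. Then the inner actions a_ij · v := Σ_k M_{ik} v (M⁻¹)_{kj} and a_ij * v := Σ_k M'_{ik} v (M'⁻¹)_{kj} coincide (i.e. a_ij · v = a_ij * v for all v ∈ M₄(ℂ) and all i, j) if and only if there exist nonzero complex numbers α₁, α₂ such that A'₁₁ = α₁A₁₁, A'₂₁ = α₁A₂₁, A'₁₂ = α₂A₁₂ and A'₂₂ = α₂A₂₂. -/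
namespace Matrix

section Block

variable {ι R : Type*} [Fintype ι] [DecidableEq ι] [Semiring R]

theorem mul_diagonal_const_mul_apply (M N : Matrix ι ι R) (v : R) (i j : ι) :
    (M * diagonal (fun _ => v) * N : Matrix ι ι R) i j = ∑ k, M i k * v * N k j := by
  rw [mul_apply]
  simp only [mul_diagonal]

theorem forall_sum_mul_mul_eq_iff {M N M' N' : Matrix ι ι R} :
    (∀ i j v, ∑ k, M i k * v * N k j = ∑ k, M' i k * v * N' k j) ↔
      ∀ v, M * diagonal (fun _ => v) * N = M' * diagonal (fun _ => v) * N' := by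
  simp only [← Matrix.ext_iff, mul_diagonal_const_mul_apply]
  exact ⟨fun h v i j => h i j v, fun h i j v => h v i j⟩

theorem commute_diagonal_const_iff {Q : Matrix ι ι R} {v : R} :
    Commute Q (diagonal fun _ => v) ↔ ∀ i j, Commute (Q i j) v := by
  simp only [Commute, SemiconjBy, ← Matrix.ext_iff, mul_diagonal, diagonal_mul]

theorem exists_ne_zero_of_mul_eq_one [Nontrivial R] {A B : Matrix ι ι R} (h : A * B = 1)
    (i : ι) : ∃ j, A i j ≠ 0 := by
  by_contra! hrow
  simpa [mul_apply, hrow] using congrFun₂ h i i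

variable {M N M' N' : Matrix ι ι R}

theorem conj_diagonal_const_eq_iff_commute (hMN : M * N = 1) (hNM : N * M = 1)
    (hMN' : M' * N' = 1) (hNM' : N' * M' = 1) :
    (∀ v, M * diagonal (fun _ => v) * N = M' * diagonal (fun _ => v) * N') ↔
      ∀ v, Commute (N * M') (diagonal fun _ => v) := by
  refine forall_congr' fun v => ⟨fun h => ?_, fun h => ?_⟩
  · calc N * M' * diagonal (fun _ => v)
        = N * (M' * diagonal (fun _ => v) * N') * M' := by simp only [mul_assoc, hNM', mul_one]
      _ = N * (M * diagonal (fun _ => v) * N) * M' := by rw [h]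
      _ = diagonal (fun _ => v) * (N * M') := by simp only [← mul_assoc, hNM, one_mul]
  · calc M * diagonal (fun _ => v) * N
        = M * (diagonal (fun _ => v) * (N * M')) * N' := by
          simp only [mul_assoc, hMN', mul_one]
      _ = M * (N * M' * diagonal (fun _ => v)) * N' := by rw [h.eq]
      _ = M' * diagonal (fun _ => v) * N' := by simp only [← mul_assoc, hMN, one_mul]

end Block

variable {ι n K : Type*} [Fintype ι] [DecidableEq ι] [Fintype n] [DecidableEq n] [CommSemiring K]

theorem forall_commute_diagonal_const_iff {Q : Matrix ι ι (Matrix n n K)} :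
    (∀ v, Commute Q (diagonal fun _ => v)) ↔ ∃ c : Matrix ι ι K, Q = c.map (scalar n) := by
  have hcenter : ∀ X : Matrix n n K, (∀ v, Commute X v) ↔ ∃ r, scalar n r = X := by
    intro X
    rw [← Set.mem_range, ← center_eq_range, Semigroup.mem_center_iff]
    exact forall_congr' fun v => eq_comm
  simp only [commute_diagonal_const_iff]
  rw [forall_comm]
  simp_rw [forall_comm (α := Matrix n n K), hcenter, Classical.skolem]
  exact exists_congr fun c =>
    ⟨fun h => Matrix.ext fun i j => (h i j).symm, fun h i j => (congrFun₂ h i j).symm⟩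

theorem conj_diagonal_const_eq_iff_exists_eq_mul_map_scalar {M N M' N' : Matrix ι ι (Matrix n n K)}
    (hMN : M * N = 1) (hNM : N * M = 1) (hMN' : M' * N' = 1) (hNM' : N' * M' = 1) :
    (∀ v, M * diagonal (fun _ => v) * N = M' * diagonal (fun _ => v) * N') ↔
      ∃ c : Matrix ι ι K, M' = M * c.map (scalar n) := by
  rw [conj_diagonal_const_eq_iff_commute hMN hNM hMN' hNM', forall_commute_diagonal_const_iff]
  refine exists_congr fun c => ⟨fun h => ?_, fun h => ?_⟩
  · rw [← h, ← mul_assoc, hMN, one_mul]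
  · rw [h, ← mul_assoc, hNM, one_mul]

theorem fin_two_mul_map_scalar (a b c d : Matrix n n K) (x : Matrix (Fin 2) (Fin 2) K) :
    !![a, b; c, d] * x.map (scalar n) =
      !![x 0 0 • a + x 1 0 • b, x 0 1 • a + x 1 1 • b;
        x 0 0 • c + x 1 0 • d, x 0 1 • c + x 1 1 • d] := by
  rw [eta_fin_two (x.map _), mul_fin_two]
  simp [scalar_apply, smul_eq_mul_diagonal]

theorem exists_ne_zero_of_eq_mul_map_scalar [Nonempty n] [Nontrivial K]
    {M N M' N' : Matrix ι ι (Matrix n n K)} {c : Matrix ι ι K} (hNM : N * M = 1)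
    (hMN' : M' * N' = 1) (hc : M' = M * c.map (scalar n)) (i : ι) : ∃ j, c i j ≠ 0 := by
  have hQ : c.map (scalar n) = N * M' := by rw [hc, ← mul_assoc, hNM, one_mul]
  have hinv : c.map (scalar n) * (N' * M) = 1 := by
    rw [hQ, mul_assoc, ← mul_assoc M', hMN', one_mul, hNM]
  obtain ⟨j, hj⟩ := exists_ne_zero_of_mul_eq_one hinv i
  exact ⟨j, fun h => hj (by simp [h])⟩

end Matrix

namespace IsGLqRep

variable {n : ℕ} {q : ℂ} {A₁₁ A₁₂ A₂₁ A₂₂ : Matrix (Fin n) (Fin n) ℂ}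

theorem combination_mul_sub_smul_mul (h : IsGLqRep q A₁₁ A₁₂ A₂₁ A₂₂) (hq0 : q ≠ 0) (s t : ℂ) :
    (s • A₁₁ + t • A₁₂) * (s • A₂₁ + t • A₂₂) - q • ((s • A₂₁ + t • A₂₂) * (s • A₁₁ + t • A₁₂)) =
      (s * t * (1 - q)) • (A₁₁ * A₂₂ - q • (A₁₂ * A₂₁)) := by
  obtain ⟨-, h₂, h₃, -, h₅, h₆, -⟩ := h
  have hda : A₂₂ * A₁₁ = A₁₁ * A₂₂ - (q - q⁻¹) • (A₁₂ * A₂₁) := by rw [← h₆]; abel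
  simp only [add_mul, mul_add, smul_mul_smul_comm, h₂, h₃, hda, ← h₅]
  match_scalars <;> field_simp <;> ring

theorem smul_qdet_eq_zero_iff [NeZero n] (h : IsGLqRep q A₁₁ A₁₂ A₂₁ A₂₂) {c : ℂ} :
    c • (A₁₁ * A₂₂ - q • (A₁₂ * A₂₁)) = 0 ↔ c = 0 :=
  ⟨fun hc => (smul_eq_zero.mp hc).resolve_right h.2.2.2.2.2.2.ne_zero, fun hc => by simp [hc]⟩

theorem mul_mul_one_sub_eq_zero [NeZero n] (h : IsGLqRep q A₁₁ A₁₂ A₂₁ A₂₂) (hq0 : q ≠ 0)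
    {s t : ℂ} (hcol : (s • A₁₁ + t • A₁₂) * (s • A₂₁ + t • A₂₂) =
      q • ((s • A₂₁ + t • A₂₂) * (s • A₁₁ + t • A₁₂))) :
    s * t * (1 - q) = 0 := by
  rw [← h.smul_qdet_eq_zero_iff, ← h.combination_mul_sub_smul_mul hq0, hcol, sub_self]

theorem mul_mul_sq_eq_zero_of_swap [NeZero n] (h : IsGLqRep q A₁₁ A₁₂ A₂₁ A₂₂) {t u : ℂ}
    (h' : IsGLqRep q (t • A₁₂) (u • A₁₁) (t • A₂₂) (u • A₂₁)) :
    t * u * (q - q⁻¹) ^ 2 = 0 := by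
  rw [← h.smul_qdet_eq_zero_iff]
  obtain ⟨-, -, -, -, h₅, h₆, -⟩ := h
  obtain ⟨-, -, -, -, h₅', h₆', -⟩ := h'
  simp only [smul_mul_smul_comm, h₅] at h₅' h₆'
  have hcomm : (t * u * (q - q⁻¹)) • (A₁₂ * A₂₁) = 0 := by
    linear_combination (norm := module) -(t * u) • h₆ + h₅'
  have hprod : (t * u * (q - q⁻¹)) • (A₁₁ * A₂₂) = 0 := by
    linear_combination (norm := module) -h₆'
  linear_combination (norm := module) (q - q⁻¹) • hprod - (q * (q - q⁻¹)) • hcomm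

theorem eq_zero_and_eq_zero_of_isGLqRep_combination [NeZero n] (h : IsGLqRep q A₁₁ A₁₂ A₂₁ A₂₂)
    (hq0 : q ≠ 0) (hq2 : q ^ 2 ≠ 1) {s t u w : ℂ}
    (h' : IsGLqRep q (s • A₁₁ + t • A₁₂) (u • A₁₁ + w • A₁₂) (s • A₂₁ + t • A₂₂)
      (u • A₂₁ + w • A₂₂))
    (hrow₁ : s ≠ 0 ∨ u ≠ 0) (hrow₂ : t ≠ 0 ∨ w ≠ 0) : t = 0 ∧ u = 0 := by
  have hq1 : 1 - q ≠ 0 := fun h1 => hq2 (by rw [← sub_eq_zero.mp h1, one_pow])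
  have hqq : q - q⁻¹ ≠ 0 := fun h1 => hq2 (by field_simp at h1; linear_combination h1)
  have hst : s * t = 0 :=
    (mul_eq_zero.mp (h.mul_mul_one_sub_eq_zero hq0 h'.2.1)).resolve_right hq1
  have huw : u * w = 0 :=
    (mul_eq_zero.mp (h.mul_mul_one_sub_eq_zero hq0 h'.2.2.1)).resolve_right hq1
  by_cases hs : s = 0
  · have hu : u ≠ 0 := hrow₁.resolve_left (not_not.mpr hs)
    have hw : w = 0 := (mul_eq_zero.mp huw).resolve_left hu
    have ht : t ≠ 0 := hrow₂.resolve_right (not_not.mpr hw)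
    subst hs hw
    simp only [zero_smul, zero_add, add_zero] at h'
    have := h.mul_mul_sq_eq_zero_of_swap h'
    simp [ht, hu, hqq] at this
  · have ht : t = 0 := (mul_eq_zero.mp hst).resolve_left hs
    have hw : w ≠ 0 := hrow₂.resolve_left (not_not.mpr ht)
    exact ⟨ht, (mul_eq_zero.mp huw).resolve_right hw⟩

end IsGLqRep

open Matrix in
/-- two representations of `GL_q(2,ℂ)` in `M₄(ℂ)` define equal
inner actions iff their components are proportional column-wise. -/
theorem inner_actions_equal_iff (q : ℂ) (hq0 : q ≠ 0)
    (hq : ∀ m : ℕ, 0 < m → q ^ m ≠ 1)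
    (A₁₁ A₁₂ A₂₁ A₂₂ A'₁₁ A'₁₂ A'₂₁ A'₂₂ : Matrix (Fin 4) (Fin 4) ℂ)
    (hrep : IsGLqRep q A₁₁ A₁₂ A₂₁ A₂₂) (hrep' : IsGLqRep q A'₁₁ A'₁₂ A'₂₁ A'₂₂)
    (N N' : Matrix (Fin 2) (Fin 2) (Matrix (Fin 4) (Fin 4) ℂ))
    (hMN : !![A₁₁, A₁₂; A₂₁, A₂₂] * N = 1) (hNM : N * !![A₁₁, A₁₂; A₂₁, A₂₂] = 1)
    (hMN' : !![A'₁₁, A'₁₂; A'₂₁, A'₂₂] * N' = 1)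
    (hNM' : N' * !![A'₁₁, A'₁₂; A'₂₁, A'₂₂] = 1) :
    (∀ (i j : Fin 2) (v : Matrix (Fin 4) (Fin 4) ℂ),
        (∑ k, !![A₁₁, A₁₂; A₂₁, A₂₂] i k * v * N k j) =
          (∑ k, !![A'₁₁, A'₁₂; A'₂₁, A'₂₂] i k * v * N' k j)) ↔
    (∃ α₁ α₂ : ℂ, α₁ ≠ 0 ∧ α₂ ≠ 0 ∧
        A'₁₁ = α₁ • A₁₁ ∧ A'₂₁ = α₁ • A₂₁ ∧ A'₁₂ = α₂ • A₁₂ ∧ A'₂₂ = α₂ • A₂₂) := by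
  rw [forall_sum_mul_mul_eq_iff,
    conj_diagonal_const_eq_iff_exists_eq_mul_map_scalar hMN hNM hMN' hNM']
  constructor
  · rintro ⟨c, hc⟩
    have hrow := exists_ne_zero_of_eq_mul_map_scalar hNM hMN' hc
    simp only [Fin.exists_fin_two] at hrow
    rw [fin_two_mul_map_scalar] at hc
    obtain ⟨⟨h₁₁, h₁₂⟩, h₂₁, h₂₂⟩ := by simpa using hc
    subst h₁₁ h₁₂ h₂₁ h₂₂
    obtain ⟨h₁₀, h₀₁⟩ := hrep.eq_zero_and_eq_zero_of_isGLqRep_combination hq0 (hq 2 two_pos)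
      hrep' (hrow 0) (hrow 1)
    refine ⟨c 0 0, c 1 1, (hrow 0).resolve_right (not_not.mpr h₀₁),
      (hrow 1).resolve_left (not_not.mpr h₁₀), ?_⟩
    simp [h₁₀, h₀₁]
  · rintro ⟨α₁, α₂, -, -, rfl, rfl, rfl, rfl⟩
    refine ⟨!![α₁, 0; 0, α₂], ?_⟩
    rw [fin_two_mul_map_scalar]
    simp
end

section
/- Let q ∈ ℂ with q ≠ 0 and q^m ≠ 1 for every positive integer m, and let A₁₁, A₁₂, A₂₁, A₂₂ be a representation of GL_q(2,ℂ) by n×n complex matrices with quantum determinant D = A₁₁A₂₂ − qA₁₂A₂₁. Then A₁₁ is invertible, and the matrix R₂₂ := A₂₂ − A₁₂A₁₁⁻¹A₂₁ satisfies A₁₂R₂₂ = qR₂₂A₁₂, A₂₁R₂₂ = qR₂₂A₂₁ and A₁₁R₂₂ = R₂₂A₁₁; moreover R₂₂ = A₁₁⁻¹D, so that A₁₁R₂₂ = D is invertible. -/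
open Matrix

/-- Two commuting endomorphisms of a nonzero finite-dimensional complex vector
space have a common eigenvector. -/
lemma glq_exists_common_eigenvector {V : Type*} [AddCommGroup V] [Module ℂ V]
    [FiniteDimensional ℂ V] [Nontrivial V] (f g : Module.End ℂ V)
    (hcomm : ∀ x, f (g x) = g (f x)) :
    ∃ (w : V) (α β : ℂ), w ≠ 0 ∧ f w = α • w ∧ g w = β • w := by
  obtain ⟨α, hα⟩ := Module.End.exists_eigenvalue f
  obtain ⟨v0, hv0⟩ := hα.exists_hasEigenvector
  have hne : Nontrivial (f.eigenspace α) :=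
    ⟨⟨⟨v0, hv0.1⟩, 0, fun h => hv0.2 (by simpa using congrArg Subtype.val h)⟩⟩
  have hgE : ∀ x ∈ f.eigenspace α, g x ∈ f.eigenspace α := by
    intro x hx
    rw [Module.End.mem_eigenspace_iff] at hx ⊢
    rw [hcomm x, hx, _root_.map_smul]
  obtain ⟨β, hβ⟩ := Module.End.exists_eigenvalue (g.restrict hgE)
  obtain ⟨v, hv⟩ := hβ.exists_hasEigenvector
  have hgv : (g.restrict hgE) v = β • v := Module.End.mem_eigenspace_iff.mp hv.1
  refine ⟨(v : V), α, β, ?_, ?_, ?_⟩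
  · intro h
    exact hv.2 (Subtype.ext h)
  · exact Module.End.mem_eigenspace_iff.mp v.2
  · have := congrArg Subtype.val hgv
    simpa [LinearMap.restrict_apply] using this

/-- from a representation of `GL_q(2,ℂ)` one obtains a
representation of the algebra `R_q` via `R₂₂ := A₂₂ − A₁₂A₁₁⁻¹A₂₁`;
moreover `R₂₂ = A₁₁⁻¹D`, so `A₁₁R₂₂ = D` is invertible. -/
theorem glq_rep_gives_Rq_rep {n : ℕ} (q : ℂ) (hq0 : q ≠ 0)
    (hq : ∀ m : ℕ, 0 < m → q ^ m ≠ 1)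
    (A₁₁ A₁₂ A₂₁ A₂₂ : Matrix (Fin n) (Fin n) ℂ)
    (hrep : IsGLqRep q A₁₁ A₁₂ A₂₁ A₂₂) :
    IsUnit A₁₁ ∧
    A₁₂ * (A₂₂ - A₁₂ * A₁₁⁻¹ * A₂₁) = q • ((A₂₂ - A₁₂ * A₁₁⁻¹ * A₂₁) * A₁₂) ∧
    A₂₁ * (A₂₂ - A₁₂ * A₁₁⁻¹ * A₂₁) = q • ((A₂₂ - A₁₂ * A₁₁⁻¹ * A₂₁) * A₂₁) ∧
    A₁₁ * (A₂₂ - A₁₂ * A₁₁⁻¹ * A₂₁) = (A₂₂ - A₁₂ * A₁₁⁻¹ * A₂₁) * A₁₁ ∧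
    A₂₂ - A₁₂ * A₁₁⁻¹ * A₂₁ = A₁₁⁻¹ * (A₁₁ * A₂₂ - q • (A₁₂ * A₂₁)) ∧
    A₁₁ * (A₂₂ - A₁₂ * A₁₁⁻¹ * A₂₁) = A₁₁ * A₂₂ - q • (A₁₂ * A₂₁) ∧
    IsUnit (A₁₁ * (A₂₂ - A₁₂ * A₁₁⁻¹ * A₂₁)) := by
  obtain ⟨h1, h2, h3, h4, h5, h6, hD⟩ := hrep
  -- the quantum determinant
  set D : Matrix (Fin n) (Fin n) ℂ := A₁₁ * A₂₂ - q • (A₁₂ * A₂₁) with hDdef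
  -- injectivity of q-powers
  have hqpow : Function.Injective (fun k : ℕ => q ^ k) := by
    intro a b hab
    simp only at hab
    rcases lt_trichotomy a b with h | h | h
    · exfalso
      apply hq (b - a) (by omega)
      have : q ^ a * q ^ (b - a) = q ^ a * 1 := by
        rw [mul_one, ← pow_add]
        rw [hab]
        congr 1
        omega
      exact mul_left_cancel₀ (pow_ne_zero _ hq0) this
    · exact h
    · exfalso
      apply hq (a - b) (by omega)
      have : q ^ b * q ^ (a - b) = q ^ b * 1 := by
        rw [mul_one, ← pow_add]
        rw [← hab]
        congr 1
        omega
      exact mul_left_cancel₀ (pow_ne_zero _ hq0) this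
  -- Step 1 : A₁₁ is invertible
  have hA : IsUnit A₁₁ := by
    by_contra hA
    have hdet : A₁₁.det = 0 := by
      by_contra hdet
      exact hA ((Matrix.isUnit_iff_isUnit_det _).mpr (isUnit_iff_ne_zero.mpr hdet))
    obtain ⟨v0, hv0ne, hv0⟩ := (Matrix.exists_mulVec_eq_zero_iff).mpr hdet
    set W := LinearMap.ker A₁₁.mulVecLin with hW
    have hv0W : v0 ∈ W := by simpa [hW, LinearMap.mem_ker] using hv0
    have hWnt : Nontrivial W :=
      ⟨⟨⟨v0, hv0W⟩, 0, fun h => hv0ne (by simpa using congrArg Subtype.val h)⟩⟩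
    have hmemW : ∀ x, x ∈ W ↔ A₁₁ *ᵥ x = 0 := by
      intro x; simp [hW, LinearMap.mem_ker]
    have hf : ∀ x ∈ W, A₁₂.mulVecLin x ∈ W := by
      intro x hx
      rw [hmemW] at hx ⊢
      simp only [Matrix.mulVecLin_apply, Matrix.mulVec_mulVec]
      rw [h1, Matrix.smul_mulVec, ← Matrix.mulVec_mulVec, hx, Matrix.mulVec_zero,
        smul_zero]
    have hg : ∀ x ∈ W, A₂₁.mulVecLin x ∈ W := by
      intro x hx
      rw [hmemW] at hx ⊢
      simp only [Matrix.mulVecLin_apply, Matrix.mulVec_mulVec]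
      rw [h2, Matrix.smul_mulVec, ← Matrix.mulVec_mulVec, hx, Matrix.mulVec_zero,
        smul_zero]
    have hcomm : ∀ x : W, (A₁₂.mulVecLin.restrict hf) ((A₂₁.mulVecLin.restrict hg) x)
        = (A₂₁.mulVecLin.restrict hg) ((A₁₂.mulVecLin.restrict hf) x) := by
      intro x
      apply Subtype.ext
      simp only [LinearMap.restrict_apply, Matrix.mulVecLin_apply, Matrix.mulVec_mulVec]
      rw [h5]
    obtain ⟨w', α, β, hw'ne, hfw, hgw⟩ :=
      glq_exists_common_eigenvector (A₁₂.mulVecLin.restrict hf) (A₂₁.mulVecLin.restrict hg) hcomm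
    set w : Fin n → ℂ := (w' : Fin n → ℂ) with hwdef
    have hwne : w ≠ 0 := fun h => hw'ne (Subtype.ext h)
    have hw0 : A₁₁ *ᵥ w = 0 := (hmemW w).mp w'.2
    have h12w : A₁₂ *ᵥ w = α • w := congrArg Subtype.val hfw
    have h21w : A₂₁ *ᵥ w = β • w := congrArg Subtype.val hgw
    -- the vectors u k = A₂₂ ^ k * w
    set u : ℕ → (Fin n → ℂ) := fun k => (A₂₂ ^ k) *ᵥ w with hu
    have hu0 : u 0 = w := by simp [hu]
    have husucc : ∀ k, u (k + 1) = A₂₂ *ᵥ u k := by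
      intro k
      show (A₂₂ ^ (k + 1)) *ᵥ w = A₂₂ *ᵥ ((A₂₂ ^ k) *ᵥ w)
      rw [Matrix.mulVec_mulVec, pow_succ']
    have h12u : ∀ k, A₁₂ *ᵥ u k = (q ^ k * α) • u k := by
      intro k
      induction k with
      | zero => simpa [hu0] using h12w
      | succ k ih =>
        rw [husucc, Matrix.mulVec_mulVec, h3, Matrix.smul_mulVec,
          ← Matrix.mulVec_mulVec, ih, Matrix.mulVec_smul, smul_smul]
        congr 1
        ring
    have h21u : ∀ k, A₂₁ *ᵥ u k = (q ^ k * β) • u k := by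
      intro k
      induction k with
      | zero => simpa [hu0] using h21w
      | succ k ih =>
        rw [husucc, Matrix.mulVec_mulVec, h4, Matrix.smul_mulVec,
          ← Matrix.mulVec_mulVec, ih, Matrix.mulVec_smul, smul_smul]
        congr 1
        ring
    have h6' : A₁₁ * A₂₂ = A₂₂ * A₁₁ + (q - q⁻¹) • (A₁₂ * A₂₁) := by
      rw [← h6]; abel
    have h11u : ∀ k, A₁₁ *ᵥ u (k + 1) = ((q ^ (2 * k + 1) - q⁻¹) * (α * β)) • u k := by
      intro k
      induction k with
      | zero =>
        rw [husucc 0, hu0, Matrix.mulVec_mulVec, h6', Matrix.add_mulVec,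
          ← Matrix.mulVec_mulVec, hw0, Matrix.mulVec_zero, zero_add,
          Matrix.smul_mulVec, ← Matrix.mulVec_mulVec, h21w,
          Matrix.mulVec_smul, h12w, smul_smul, smul_smul]
        congr 1
        ring
      | succ k ih =>
        rw [husucc (k + 1), Matrix.mulVec_mulVec, h6', Matrix.add_mulVec,
          ← Matrix.mulVec_mulVec, ih, Matrix.mulVec_smul, ← husucc k,
          Matrix.smul_mulVec, ← Matrix.mulVec_mulVec, h21u (k + 1),
          Matrix.mulVec_smul, h12u (k + 1), smul_smul, smul_smul, ← add_smul]
        congr 1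
        field_simp
        ring
    -- α * β ≠ 0
    have hDw : D *ᵥ w = (-(q⁻¹) * (α * β)) • w := by
      have hu1 : A₁₁ *ᵥ (A₂₂ *ᵥ w) = ((q ^ (2 * 0 + 1) - q⁻¹) * (α * β)) • w := by
        have h := h11u 0
        rwa [husucc 0, hu0] at h
      rw [hDdef, Matrix.sub_mulVec, ← Matrix.mulVec_mulVec, hu1,
        Matrix.smul_mulVec, ← Matrix.mulVec_mulVec, h21w,
        Matrix.mulVec_smul, h12w, smul_smul, smul_smul, ← sub_smul]
      congr 1
      ring
    have hDinj : Function.Injective (D.mulVec) := Matrix.mulVec_injective_iff_isUnit.mpr hD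
    have hαβ : α * β ≠ 0 := by
      intro h
      apply hwne
      have : D *ᵥ w = D *ᵥ 0 := by
        rw [Matrix.mulVec_zero, hDw, h, mul_zero, zero_smul]
      exact hDinj this
    have hα : α ≠ 0 := fun h => hαβ (by rw [h, zero_mul])
    -- there is some k with u k = 0
    have hex : ∃ k, u k = 0 := by
      by_contra hne
      push_neg at hne
      have hind : LinearIndependent ℂ u := by
        apply Module.End.eigenvectors_linearIndependent' A₁₂.mulVecLin
          (fun k : ℕ => q ^ k * α) (fun a b hab => hqpow (mul_right_cancel₀ hα hab)) u
        intro k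
        constructor
        · rw [Module.End.mem_eigenspace_iff]
          simpa [Matrix.mulVecLin_apply] using h12u k
        · exact hne k
      exact Module.Finite.not_linearIndependent_of_infinite u hind
    -- minimal such k leads to a contradiction
    have hm := Nat.find_spec hex
    have hm0 : Nat.find hex ≠ 0 := by
      intro h
      rw [h, hu0] at hm
      exact hwne hm
    obtain ⟨m', hmeq⟩ : ∃ m', Nat.find hex = m' + 1 := ⟨Nat.find hex - 1, by omega⟩
    have hm' : u m' ≠ 0 := Nat.find_min hex (by omega)
    rw [hmeq] at hm
    have : ((q ^ (2 * m' + 1) - q⁻¹) * (α * β)) • u m' = 0 := by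
      rw [← h11u m', hm, Matrix.mulVec_zero]
    rcases smul_eq_zero.mp this with hc | hc
    · rcases mul_eq_zero.mp hc with hc' | hc'
      · have : q ^ (2 * m' + 1) * q = q⁻¹ * q := by
          rw [sub_eq_zero.mp hc']
        rw [inv_mul_cancel₀ hq0, ← pow_succ] at this
        exact hq (2 * m' + 1 + 1) (by omega) this
      · exact hαβ hc'
    · exact hm' hc
  -- Step 2 : the algebraic identities
  have hdet : IsUnit A₁₁.det := (Matrix.isUnit_iff_isUnit_det _).mp hA
  have hBA : A₁₁⁻¹ * A₁₁ = 1 := Matrix.nonsing_inv_mul _ hdet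
  have hAB : A₁₁ * A₁₁⁻¹ = 1 := Matrix.mul_nonsing_inv _ hdet
  have h12B : A₁₂ * A₁₁⁻¹ = q • (A₁₁⁻¹ * A₁₂) := by
    have : A₁₁⁻¹ * (A₁₁ * A₁₂) * A₁₁⁻¹ = A₁₂ * A₁₁⁻¹ := by
      rw [← mul_assoc, hBA, one_mul]
    rw [← this, h1, Matrix.mul_smul, Matrix.smul_mul, mul_assoc, mul_assoc, hAB, mul_one]
  have h21B : A₂₁ * A₁₁⁻¹ = q • (A₁₁⁻¹ * A₂₁) := by
    have : A₁₁⁻¹ * (A₁₁ * A₂₁) * A₁₁⁻¹ = A₂₁ * A₁₁⁻¹ := by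
      rw [← mul_assoc, hBA, one_mul]
    rw [← this, h2, Matrix.mul_smul, Matrix.smul_mul, mul_assoc, mul_assoc, hAB, mul_one]
  have hB12 : A₁₁⁻¹ * A₁₂ = q⁻¹ • (A₁₂ * A₁₁⁻¹) := by
    rw [h12B, smul_smul, inv_mul_cancel₀ hq0, one_smul]
  have hB21 : A₁₁⁻¹ * A₂₁ = q⁻¹ • (A₂₁ * A₁₁⁻¹) := by
    rw [h21B, smul_smul, inv_mul_cancel₀ hq0, one_smul]
  set X : Matrix (Fin n) (Fin n) ℂ := A₁₂ * A₁₁⁻¹ * A₂₁ with hX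
  -- key products
  have hAX : A₁₁ * X = q • (A₁₂ * A₂₁) := by
    rw [hX, ← mul_assoc, ← mul_assoc, h1]
    simp only [Matrix.smul_mul, mul_assoc]
    rw [← mul_assoc A₁₁ A₁₁⁻¹ A₂₁, hAB, one_mul]
  have hXA : X * A₁₁ = q⁻¹ • (A₁₂ * A₂₁) := by
    have h2' : A₂₁ * A₁₁ = q⁻¹ • (A₁₁ * A₂₁) := by
      rw [h2, smul_smul, inv_mul_cancel₀ hq0, one_smul]
    rw [hX, mul_assoc, mul_assoc, h2']
    simp only [Matrix.mul_smul, Matrix.smul_mul]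
    rw [← mul_assoc A₁₁⁻¹ A₁₁ A₂₁, hBA, one_mul]
  have h12X : A₁₂ * X = q • (X * A₁₂) := by
    rw [hX]
    simp only [mul_assoc]
    rw [← h5, ← mul_assoc A₁₁⁻¹ A₁₂ A₂₁, hB12]
    simp only [Matrix.smul_mul, Matrix.mul_smul, smul_smul, mul_assoc]
    rw [mul_inv_cancel₀ hq0, one_smul]
  have h21X : A₂₁ * X = q • (X * A₂₁) := by
    rw [hX]
    simp only [mul_assoc]
    rw [← mul_assoc A₂₁ A₁₂, ← h5, mul_assoc, ← mul_assoc A₂₁ A₁₁⁻¹, h21B]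
    simp only [Matrix.smul_mul, Matrix.mul_smul, smul_smul, mul_assoc]
  refine ⟨hA, ?_, ?_, ?_, ?_, ?_, ?_⟩
  · rw [mul_sub, sub_mul, h3, h12X, smul_sub]
  · rw [mul_sub, sub_mul, h4, h21X, smul_sub]
  · rw [mul_sub, sub_mul, hAX, hXA]
    have : A₁₁ * A₂₂ = A₂₂ * A₁₁ + (q - q⁻¹) • (A₁₂ * A₂₁) := by rw [← h6]; abel
    rw [this, sub_smul]
    abel
  · rw [hX, mul_sub, ← mul_assoc, hBA, one_mul, Matrix.mul_smul]
    congr 1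
    rw [← mul_assoc, hB12, Matrix.smul_mul, smul_smul, mul_inv_cancel₀ hq0, one_smul]
  · rw [mul_sub, hAX]
  · rw [mul_sub, hAX]
    exact hD
end

section
/- Let q ∈ ℂ with q ≠ 0, and let A₁₁, A₁₂, A₂₁, R₂₂ be n×n complex matrices satisfying the relations of the algebra R_q: A₁₁A₁₂ = qA₁₂A₁₁, A₁₁A₂₁ = qA₂₁A₁₁, A₁₂A₂₁ = A₂₁A₁₂, A₁₂R₂₂ = qR₂₂A₁₂, A₂₁R₂₂ = qR₂₂A₂₁ and A₁₁R₂₂ = R₂₂A₁₁, with A₁₁ and R₂₂ invertible. Then A₂₂ := R₂₂ + A₁₂A₁₁⁻¹A₂₁ satisfies A₁₂A₂₂ = qA₂₂A₁₂, A₂₁A₂₂ = qA₂₂A₂₁ and A₁₁A₂₂ − A₂₂A₁₁ = (q − q⁻¹)A₁₂A₂₁, and the quantum determinant A₁₁A₂₂ − qA₁₂A₂₁ equals A₁₁R₂₂ and is invertible; hence A₁₁, A₁₂, A₂₁, A₂₂ is a representation of GL_q(2,ℂ). Moreover this quantum determinant equals the identity matrix (i.e. the quadruple is a representation of SL_q(2,ℂ))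 if and only if R₂₂ = A₁₁⁻¹. -/
/-- from a representation of the algebra `R_q` with `A₁₁`, `R₂₂`
invertible one obtains a representation of `GL_q(2,ℂ)` via
`A₂₂ := R₂₂ + A₁₂A₁₁⁻¹A₂₁`, with quantum determinant `A₁₁R₂₂`; it is a
representation of `SL_q(2,ℂ)` iff `R₂₂ = A₁₁⁻¹`. -/
theorem Rq_rep_gives_glq_rep {n : ℕ} (q : ℂ) (hq0 : q ≠ 0)
    (A₁₁ A₁₂ A₂₁ R₂₂ : Matrix (Fin n) (Fin n) ℂ)
    (h₁ : A₁₁ * A₁₂ = q • (A₁₂ * A₁₁))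
    (h₂ : A₁₁ * A₂₁ = q • (A₂₁ * A₁₁))
    (h₃ : A₁₂ * A₂₁ = A₂₁ * A₁₂)
    (h₄ : A₁₂ * R₂₂ = q • (R₂₂ * A₁₂))
    (h₅ : A₂₁ * R₂₂ = q • (R₂₂ * A₂₁))
    (h₆ : A₁₁ * R₂₂ = R₂₂ * A₁₁)
    (hA₁₁ : IsUnit A₁₁) (hR₂₂ : IsUnit R₂₂) :
    A₁₂ * (R₂₂ + A₁₂ * A₁₁⁻¹ * A₂₁) = q • ((R₂₂ + A₁₂ * A₁₁⁻¹ * A₂₁) * A₁₂) ∧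
    A₂₁ * (R₂₂ + A₁₂ * A₁₁⁻¹ * A₂₁) = q • ((R₂₂ + A₁₂ * A₁₁⁻¹ * A₂₁) * A₂₁) ∧
    A₁₁ * (R₂₂ + A₁₂ * A₁₁⁻¹ * A₂₁) - (R₂₂ + A₁₂ * A₁₁⁻¹ * A₂₁) * A₁₁ =
      (q - q⁻¹) • (A₁₂ * A₂₁) ∧
    A₁₁ * (R₂₂ + A₁₂ * A₁₁⁻¹ * A₂₁) - q • (A₁₂ * A₂₁) = A₁₁ * R₂₂ ∧
    IsUnit (A₁₁ * (R₂₂ + A₁₂ * A₁₁⁻¹ * A₂₁) - q • (A₁₂ * A₂₁)) ∧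
    IsGLqRep q A₁₁ A₁₂ A₂₁ (R₂₂ + A₁₂ * A₁₁⁻¹ * A₂₁) ∧
    (A₁₁ * (R₂₂ + A₁₂ * A₁₁⁻¹ * A₂₁) - q • (A₁₂ * A₂₁) = 1 ↔ R₂₂ = A₁₁⁻¹) := by
  have hd : IsUnit A₁₁.det := (Matrix.isUnit_iff_isUnit_det A₁₁).mp hA₁₁
  have hL : A₁₁⁻¹ * A₁₁ = 1 := Matrix.nonsing_inv_mul _ hd
  have hRi : A₁₁ * A₁₁⁻¹ = 1 := Matrix.mul_nonsing_inv _ hd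
  -- A₁₂ * A₁₁⁻¹ = q • (A₁₁⁻¹ * A₁₂)
  have hi₁ : A₁₂ * A₁₁⁻¹ = q • (A₁₁⁻¹ * A₁₂) := by
    calc A₁₂ * A₁₁⁻¹ = A₁₁⁻¹ * (A₁₁ * A₁₂) * A₁₁⁻¹ := by
          rw [← mul_assoc, hL, one_mul]
      _ = A₁₁⁻¹ * (q • (A₁₂ * A₁₁)) * A₁₁⁻¹ := by rw [h₁]
      _ = q • (A₁₁⁻¹ * A₁₂) := by
          simp only [mul_smul_comm, smul_mul_assoc]
          rw [mul_assoc, mul_assoc, hRi, mul_one]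
  have hi₂ : A₂₁ * A₁₁⁻¹ = q • (A₁₁⁻¹ * A₂₁) := by
    calc A₂₁ * A₁₁⁻¹ = A₁₁⁻¹ * (A₁₁ * A₂₁) * A₁₁⁻¹ := by
          rw [← mul_assoc, hL, one_mul]
      _ = A₁₁⁻¹ * (q • (A₂₁ * A₁₁)) * A₁₁⁻¹ := by rw [h₂]
      _ = q • (A₁₁⁻¹ * A₂₁) := by
          simp only [mul_smul_comm, smul_mul_assoc]
          rw [mul_assoc, mul_assoc, hRi, mul_one]
  have c₁ : A₁₂ * (R₂₂ + A₁₂ * A₁₁⁻¹ * A₂₁) = q • ((R₂₂ + A₁₂ * A₁₁⁻¹ * A₂₁) * A₁₂) := by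
    have : A₁₂ * (A₁₂ * A₁₁⁻¹ * A₂₁) = q • (A₁₂ * A₁₁⁻¹ * A₂₁ * A₁₂) := by
      calc A₁₂ * (A₁₂ * A₁₁⁻¹ * A₂₁) = A₁₂ * (A₁₂ * A₁₁⁻¹) * A₂₁ := by
            simp only [mul_assoc]
        _ = A₁₂ * (q • (A₁₁⁻¹ * A₁₂)) * A₂₁ := by rw [hi₁]
        _ = q • (A₁₂ * A₁₁⁻¹ * (A₁₂ * A₂₁)) := by
            simp only [mul_smul_comm, smul_mul_assoc, mul_assoc]
        _ = q • (A₁₂ * A₁₁⁻¹ * A₂₁ * A₁₂) := by rw [h₃]; simp only [mul_assoc]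
    rw [mul_add, add_mul, h₄, this, smul_add]
  have c₂ : A₂₁ * (R₂₂ + A₁₂ * A₁₁⁻¹ * A₂₁) = q • ((R₂₂ + A₁₂ * A₁₁⁻¹ * A₂₁) * A₂₁) := by
    have : A₂₁ * (A₁₂ * A₁₁⁻¹ * A₂₁) = q • (A₁₂ * A₁₁⁻¹ * A₂₁ * A₂₁) := by
      calc A₂₁ * (A₁₂ * A₁₁⁻¹ * A₂₁) = A₂₁ * A₁₂ * A₁₁⁻¹ * A₂₁ := by
            rw [← mul_assoc, ← mul_assoc]
        _ = A₁₂ * (A₂₁ * A₁₁⁻¹) * A₂₁ := by rw [← h₃, mul_assoc A₁₂]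
        _ = A₁₂ * (q • (A₁₁⁻¹ * A₂₁)) * A₂₁ := by rw [hi₂]
        _ = q • (A₁₂ * A₁₁⁻¹ * A₂₁ * A₂₁) := by
            simp only [mul_smul_comm, smul_mul_assoc, mul_assoc]
    rw [mul_add, add_mul, h₅, this, smul_add]
  have key1 : A₁₁ * (A₁₂ * A₁₁⁻¹ * A₂₁) = q • (A₁₂ * A₂₁) := by
    calc A₁₁ * (A₁₂ * A₁₁⁻¹ * A₂₁) = A₁₁ * A₁₂ * A₁₁⁻¹ * A₂₁ := by
          rw [← mul_assoc, ← mul_assoc]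
      _ = q • (A₁₂ * A₁₁) * A₁₁⁻¹ * A₂₁ := by rw [h₁]
      _ = q • (A₁₂ * A₂₁) := by
          simp only [smul_mul_assoc, mul_assoc, hRi, mul_one]
  have key2 : A₁₂ * A₁₁⁻¹ * A₂₁ * A₁₁ = q⁻¹ • (A₁₂ * A₂₁) := by
    have h₂' : A₂₁ * A₁₁ = q⁻¹ • (A₁₁ * A₂₁) := by
      rw [h₂, smul_smul, inv_mul_cancel₀ hq0, one_smul]
    calc A₁₂ * A₁₁⁻¹ * A₂₁ * A₁₁ = A₁₂ * A₁₁⁻¹ * (A₂₁ * A₁₁) := by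
          rw [mul_assoc]
      _ = q⁻¹ • (A₁₂ * (A₁₁⁻¹ * A₁₁) * A₂₁) := by
          rw [h₂']; simp only [mul_smul_comm, mul_assoc]
      _ = q⁻¹ • (A₁₂ * A₂₁) := by rw [hL, mul_one]
  have c₃ : A₁₁ * (R₂₂ + A₁₂ * A₁₁⁻¹ * A₂₁) - (R₂₂ + A₁₂ * A₁₁⁻¹ * A₂₁) * A₁₁ =
      (q - q⁻¹) • (A₁₂ * A₂₁) := by
    rw [mul_add, add_mul, key1, key2, h₆, sub_smul]
    abel
  have c₄ : A₁₁ * (R₂₂ + A₁₂ * A₁₁⁻¹ * A₂₁) - q • (A₁₂ * A₂₁) = A₁₁ * R₂₂ := by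
    rw [mul_add, key1]; abel
  have c₅ : IsUnit (A₁₁ * (R₂₂ + A₁₂ * A₁₁⁻¹ * A₂₁) - q • (A₁₂ * A₂₁)) := by
    rw [c₄]; exact hA₁₁.mul hR₂₂
  refine ⟨c₁, c₂, c₃, c₄, c₅, ⟨h₁, h₂, c₁, c₂, h₃, c₃, c₅⟩, ?_⟩
  rw [c₄]
  constructor
  · intro h
    exact (Matrix.inv_eq_right_inv h).symm
  · intro h
    rw [h, hRi]
end

section
/- Let q ∈ ℂ with q ≠ 0. Let A₁₁, A₁₂, A₂₁, A'₂₂ be a representation of SL_q(2,ℂ) by n×n complex matrices (so the quantum determinant A₁₁A'₂₂ − qA₁₂A₂₁ equals the identity matrix) with A₁₁ invertible, and let D be an invertible n×n complex matrix commuting with A₁₁, A₁₂, A₂₁ and A'₂₂. Then A₂₂ := A'₂₂ + A₁₁⁻¹(D − 1) makes A₁₁, A₁₂, A₂₁, A₂₂ a representation of GL_q(2,ℂ) whose quantum determinant A₁₁A₂₂ − qA₁₂A₂₁ equals D. In particular, every invertible invariant of an inner SL_q(2,ℂ)-action is the quantum determinant of a connected GL_q(2,ℂ)-action. -/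
/-- given a representation of `SL_q(2,ℂ)` with `A₁₁` invertible
and an invertible invariant `D` (`D` commutes with all components),
`A₂₂ := A'₂₂ + A₁₁⁻¹(D − 1)` yields a connected representation of `GL_q(2,ℂ)`
with quantum determinant `D`. -/
theorem slq_invariant_is_qdet_of_connected_glq {n : ℕ} (q : ℂ) (hq0 : q ≠ 0)
    (A₁₁ A₁₂ A₂₁ A'₂₂ D : Matrix (Fin n) (Fin n) ℂ)
    (h₁ : A₁₁ * A₁₂ = q • (A₁₂ * A₁₁))
    (h₂ : A₁₁ * A₂₁ = q • (A₂₁ * A₁₁))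
    (h₃ : A₁₂ * A'₂₂ = q • (A'₂₂ * A₁₂))
    (h₄ : A₂₁ * A'₂₂ = q • (A'₂₂ * A₂₁))
    (h₅ : A₁₂ * A₂₁ = A₂₁ * A₁₂)
    (h₆ : A₁₁ * A'₂₂ - A'₂₂ * A₁₁ = (q - q⁻¹) • (A₁₂ * A₂₁))
    (hdet1 : A₁₁ * A'₂₂ - q • (A₁₂ * A₂₁) = 1)
    (hA₁₁ : IsUnit A₁₁) (hD : IsUnit D)
    (hD₁ : D * A₁₁ = A₁₁ * D) (hD₂ : D * A₁₂ = A₁₂ * D)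
    (hD₃ : D * A₂₁ = A₂₁ * D) (hD₄ : D * A'₂₂ = A'₂₂ * D) :
    IsGLqRep q A₁₁ A₁₂ A₂₁ (A'₂₂ + A₁₁⁻¹ * (D - 1)) ∧
    A₁₁ * (A'₂₂ + A₁₁⁻¹ * (D - 1)) - q • (A₁₂ * A₂₁) = D := by
  have hdet : IsUnit A₁₁.det := (Matrix.isUnit_iff_isUnit_det _).mp hA₁₁
  have I1 : A₁₁⁻¹ * A₁₁ = 1 := Matrix.nonsing_inv_mul _ hdet
  have I2 : A₁₁ * A₁₁⁻¹ = 1 := Matrix.mul_nonsing_inv _ hdet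
  -- commutation of D - 1 with everything
  have k₂ : A₁₂ * (D - 1) = (D - 1) * A₁₂ := by
    rw [mul_sub, sub_mul, ← hD₂, mul_one, one_mul]
  have k₃ : A₂₁ * (D - 1) = (D - 1) * A₂₁ := by
    rw [mul_sub, sub_mul, ← hD₃, mul_one, one_mul]
  -- q-commutation with A₁₁⁻¹
  have h₁' : A₁₂ * A₁₁⁻¹ = q • (A₁₁⁻¹ * A₁₂) := by
    have : A₁₁⁻¹ * (A₁₁ * A₁₂) * A₁₁⁻¹ = A₁₁⁻¹ * (q • (A₁₂ * A₁₁)) * A₁₁⁻¹ := by rw [h₁]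
    calc A₁₂ * A₁₁⁻¹ = A₁₁⁻¹ * (A₁₁ * A₁₂) * A₁₁⁻¹ := by
          rw [← mul_assoc, I1, one_mul]
      _ = A₁₁⁻¹ * (q • (A₁₂ * A₁₁)) * A₁₁⁻¹ := this
      _ = q • (A₁₁⁻¹ * A₁₂ * (A₁₁ * A₁₁⁻¹)) := by
          rw [Matrix.mul_smul, Matrix.smul_mul]
          congr 1
          rw [mul_assoc, mul_assoc, mul_assoc]
      _ = q • (A₁₁⁻¹ * A₁₂) := by rw [I2, mul_one]
  have h₂' : A₂₁ * A₁₁⁻¹ = q • (A₁₁⁻¹ * A₂₁) := by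
    have : A₁₁⁻¹ * (A₁₁ * A₂₁) * A₁₁⁻¹ = A₁₁⁻¹ * (q • (A₂₁ * A₁₁)) * A₁₁⁻¹ := by rw [h₂]
    calc A₂₁ * A₁₁⁻¹ = A₁₁⁻¹ * (A₁₁ * A₂₁) * A₁₁⁻¹ := by
          rw [← mul_assoc, I1, one_mul]
      _ = A₁₁⁻¹ * (q • (A₂₁ * A₁₁)) * A₁₁⁻¹ := this
      _ = q • (A₁₁⁻¹ * A₂₁ * (A₁₁ * A₁₁⁻¹)) := by
          rw [Matrix.mul_smul, Matrix.smul_mul]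
          congr 1
          rw [mul_assoc, mul_assoc, mul_assoc]
      _ = q • (A₁₁⁻¹ * A₂₁) := by rw [I2, mul_one]
  set B := A₁₁⁻¹ * (D - 1) with hB
  have hB1 : A₁₁ * B = D - 1 := by rw [hB, ← mul_assoc, I2, one_mul]
  have hB2 : B * A₁₁ = D - 1 := by
    have hc : (D - 1) * A₁₁ = A₁₁ * (D - 1) := by
      rw [sub_mul, mul_sub, hD₁, one_mul, mul_one]
    rw [hB, mul_assoc, hc, ← mul_assoc, I1, one_mul]
  refine ⟨⟨h₁, h₂, ?_, ?_, h₅, ?_, ?_⟩, ?_⟩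
  · -- A₁₂ * (A'₂₂ + B) = q • ((A'₂₂ + B) * A₁₂)
    calc A₁₂ * (A'₂₂ + B)
        = A₁₂ * A'₂₂ + A₁₂ * A₁₁⁻¹ * (D - 1) := by rw [mul_add, hB, mul_assoc]
      _ = q • (A'₂₂ * A₁₂) + q • (A₁₁⁻¹ * (A₁₂ * (D - 1))) := by
          rw [h₃, h₁', Matrix.smul_mul, mul_assoc]
      _ = q • (A'₂₂ * A₁₂ + A₁₁⁻¹ * ((D - 1) * A₁₂)) := by rw [k₂, smul_add]
      _ = q • ((A'₂₂ + B) * A₁₂) := by rw [add_mul, hB, mul_assoc]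
  · calc A₂₁ * (A'₂₂ + B)
        = A₂₁ * A'₂₂ + A₂₁ * A₁₁⁻¹ * (D - 1) := by rw [mul_add, hB, mul_assoc]
      _ = q • (A'₂₂ * A₂₁) + q • (A₁₁⁻¹ * (A₂₁ * (D - 1))) := by
          rw [h₄, h₂', Matrix.smul_mul, mul_assoc]
      _ = q • (A'₂₂ * A₂₁ + A₁₁⁻¹ * ((D - 1) * A₂₁)) := by rw [k₃, smul_add]
      _ = q • ((A'₂₂ + B) * A₂₁) := by rw [add_mul, hB, mul_assoc]
  · calc A₁₁ * (A'₂₂ + B) - (A'₂₂ + B) * A₁₁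
        = (A₁₁ * A'₂₂ - A'₂₂ * A₁₁) + (A₁₁ * B - B * A₁₁) := by
          rw [mul_add, add_mul]; abel
      _ = (q - q⁻¹) • (A₁₂ * A₂₁) := by rw [hB1, hB2, sub_self, add_zero, h₆]
  · have : A₁₁ * (A'₂₂ + B) - q • (A₁₂ * A₂₁) = D := by
      rw [mul_add, hB1]
      calc A₁₁ * A'₂₂ + (D - 1) - q • (A₁₂ * A₂₁)
          = (A₁₁ * A'₂₂ - q • (A₁₂ * A₂₁)) + (D - 1) := by abel
        _ = D := by rw [hdet1]; abel
    rw [this]; exact hD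
  · rw [mul_add, hB1]
    calc A₁₁ * A'₂₂ + (D - 1) - q • (A₁₂ * A₂₁)
        = (A₁₁ * A'₂₂ - q • (A₁₂ * A₂₁)) + (D - 1) := by abel
      _ = D := by rw [hdet1]; abel
end

section
/- Let q ∈ ℂ with q ≠ 0 and q^m ≠ 1 for every positive integer m, and let A₁₁, A₁₂, A₂₁, A₂₂ be a representation of GL_q(2,ℂ) by n×n complex matrices with quantum determinant D = A₁₁A₂₂ − qA₁₂A₂₁. Then A₁₁ is invertible, the quadruple A₁₁, A₁₂, A₂₁, A'₂₂ with A'₂₂ := A₁₁⁻¹(1 + qA₁₂A₂₁) is a representation of SL_q(2,ℂ) (its quantum determinant A₁₁A'₂₂ − qA₁₂A₂₁ is the identity matrix), D commutes with all of A₁₁, A₁₂, A₂₁, A₂₂, and A₂₂ = A'₂₂ + A₁₁⁻¹(D − 1). -/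
open Polynomial in
lemma aux_det_chain {n : ℕ} (q : ℂ) (hq0 : q ≠ 0)
    (hq : ∀ m : ℕ, 0 < m → q ^ m ≠ 1)
    (Dm Cm : Matrix (Fin n) (Fin n) ℂ) (hdet : Dm.det ≠ 0)
    (h : ∀ k : ℕ, (Dm + q ^ (2 * k + 1) • Cm).det = 0) : False := by
  set p : Polynomial ℂ :=
    (Dm.map Polynomial.C + (Polynomial.X : Polynomial ℂ) • Cm.map Polynomial.C).det with hp
  have heval : ∀ t : ℂ, p.eval t = (Dm + t • Cm).det := by
    intro t
    have hmap : (Dm.map Polynomial.C + (Polynomial.X : Polynomial ℂ) • Cm.map Polynomial.C).map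
        (Polynomial.evalRingHom t) = Dm + t • Cm := by
      ext i j
      simp only [Matrix.map_apply, Matrix.add_apply, Matrix.smul_apply, smul_eq_mul,
        Polynomial.coe_evalRingHom, Polynomial.eval_add, Polynomial.eval_mul,
        Polynomial.eval_C, Polynomial.eval_X]
    calc p.eval t = (Polynomial.evalRingHom t) p := rfl
      _ = ((Dm.map Polynomial.C + (Polynomial.X : Polynomial ℂ) • Cm.map Polynomial.C).map
            (Polynomial.evalRingHom t)).det := by
            rw [hp, RingHom.map_det, RingHom.mapMatrix_apply]
      _ = (Dm + t • Cm).det := by rw [hmap]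
  have hp0 : p ≠ 0 := by
    intro h0
    apply hdet
    have := heval 0
    rw [h0] at this
    simpa using this.symm
  have hfin : Set.Finite {x : ℂ | p.IsRoot x} := Polynomial.finite_setOf_isRoot hp0
  have hinj : Function.Injective (fun k : ℕ => q ^ (2 * k + 1)) := by
    intro a b hab
    simp only at hab
    by_contra hne
    wlog hlt : a < b generalizing a b
    · exact this hab.symm (Ne.symm hne) (by omega)
    have hsplit : q ^ (2 * b + 1) = q ^ (2 * a + 1) * q ^ (2 * (b - a)) := by
      rw [← pow_add]; congr 1; omega
    have : q ^ (2 * (b - a)) = 1 := by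
      have h1 : q ^ (2 * a + 1) * q ^ (2 * (b - a)) = q ^ (2 * a + 1) * 1 := by
        rw [← hsplit, mul_one, hab]
      exact mul_left_cancel₀ (pow_ne_zero _ hq0) h1
    exact hq (2 * (b - a)) (by omega) this
  have hmem : ∀ k : ℕ, (fun k : ℕ => q ^ (2 * k + 1)) k ∈ {x : ℂ | p.IsRoot x} := by
    intro k
    simp only [Set.mem_setOf_eq, Polynomial.IsRoot.def]
    rw [heval]
    exact h k
  exact (Set.infinite_of_injective_forall_mem hinj hmem) hfin


open Matrix


/-- every representation of `GL_q(2,ℂ)` has invertible `A₁₁`,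
determines a connected representation of `SL_q(2,ℂ)` via
`A'₂₂ := A₁₁⁻¹(1 + qA₁₂A₂₁)`, its quantum determinant `D` commutes with all
components, and `A₂₂ = A'₂₂ + A₁₁⁻¹(D − 1)`. -/
theorem glq_rep_connected_slq_rep {n : ℕ} (q : ℂ) (hq0 : q ≠ 0)
    (hq : ∀ m : ℕ, 0 < m → q ^ m ≠ 1)
    (A₁₁ A₁₂ A₂₁ A₂₂ : Matrix (Fin n) (Fin n) ℂ)
    (hrep : IsGLqRep q A₁₁ A₁₂ A₂₁ A₂₂) :
    IsUnit A₁₁ ∧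
    A₁₂ * (A₁₁⁻¹ * (1 + q • (A₁₂ * A₂₁))) =
      q • ((A₁₁⁻¹ * (1 + q • (A₁₂ * A₂₁))) * A₁₂) ∧
    A₂₁ * (A₁₁⁻¹ * (1 + q • (A₁₂ * A₂₁))) =
      q • ((A₁₁⁻¹ * (1 + q • (A₁₂ * A₂₁))) * A₂₁) ∧
    A₁₁ * (A₁₁⁻¹ * (1 + q • (A₁₂ * A₂₁))) -
      (A₁₁⁻¹ * (1 + q • (A₁₂ * A₂₁))) * A₁₁ = (q - q⁻¹) • (A₁₂ * A₂₁) ∧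
    A₁₁ * (A₁₁⁻¹ * (1 + q • (A₁₂ * A₂₁))) - q • (A₁₂ * A₂₁) = 1 ∧
    (A₁₁ * A₂₂ - q • (A₁₂ * A₂₁)) * A₁₁ = A₁₁ * (A₁₁ * A₂₂ - q • (A₁₂ * A₂₁)) ∧
    (A₁₁ * A₂₂ - q • (A₁₂ * A₂₁)) * A₁₂ = A₁₂ * (A₁₁ * A₂₂ - q • (A₁₂ * A₂₁)) ∧
    (A₁₁ * A₂₂ - q • (A₁₂ * A₂₁)) * A₂₁ = A₂₁ * (A₁₁ * A₂₂ - q • (A₁₂ * A₂₁)) ∧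
    (A₁₁ * A₂₂ - q • (A₁₂ * A₂₁)) * A₂₂ = A₂₂ * (A₁₁ * A₂₂ - q • (A₁₂ * A₂₁)) ∧
    A₂₂ = A₁₁⁻¹ * (1 + q • (A₁₂ * A₂₁)) +
      A₁₁⁻¹ * ((A₁₁ * A₂₂ - q • (A₁₂ * A₂₁)) - 1) := by
  obtain ⟨h1, h2, h3, h4, h5, h6, hD⟩ := hrep
  set Cm : Matrix (Fin n) (Fin n) ℂ := A₁₂ * A₂₁ with hCm
  set Dm : Matrix (Fin n) (Fin n) ℂ := A₁₁ * A₂₂ - q • Cm with hDm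
  -- basic derived relations
  have hE1 : A₁₁ * Cm = (q * q) • (Cm * A₁₁) := by
    rw [hCm, ← mul_assoc, h1, smul_mul_assoc, mul_assoc, h2, mul_smul_comm, smul_smul,
      mul_assoc]
  have hE2 : Cm * A₂₂ = (q * q) • (A₂₂ * Cm) := by
    rw [hCm, mul_assoc, h4, mul_smul_comm, ← mul_assoc, h3, smul_mul_assoc, smul_smul,
      mul_assoc]
  have hE3 : A₁₂ * Cm = Cm * A₁₂ := by
    calc A₁₂ * Cm = A₁₂ * (A₂₁ * A₁₂) := by rw [h5]
      _ = (A₁₂ * A₂₁) * A₁₂ := by rw [mul_assoc]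
      _ = Cm * A₁₂ := by rw [hCm]
  have hE4 : A₂₁ * Cm = Cm * A₂₁ := by
    calc A₂₁ * Cm = A₂₁ * (A₁₂ * A₂₁) := by rw [hCm]
      _ = (A₂₁ * A₁₂) * A₂₁ := by rw [mul_assoc]
      _ = Cm * A₂₁ := by rw [h5]
  have hCA : q • (Cm * A₁₁) = q⁻¹ • (A₁₁ * Cm) := by
    rw [hE1, smul_smul]
    congr 1
    field_simp
  have hCA2 : q • (A₂₂ * Cm) = q⁻¹ • (Cm * A₂₂) := by
    rw [hE2, smul_smul]
    congr 1
    field_simp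
  have hE5 : A₂₂ * A₁₁ = Dm + q⁻¹ • Cm := by
    have h6' : A₂₂ * A₁₁ = A₁₁ * A₂₂ - (q - q⁻¹) • Cm := by
      rw [← h6]; abel
    rw [h6', hDm, sub_smul]
    abel
  have hDC : A₁₁ * A₂₂ = Dm + q • Cm := by rw [hDm]; abel
  -- D commutes with everything
  have hd6 : Dm * A₁₁ = A₁₁ * Dm := by
    calc Dm * A₁₁ = (A₁₁ * A₂₂) * A₁₁ - q • (Cm * A₁₁) := by
          rw [hDm, sub_mul, smul_mul_assoc]
      _ = A₁₁ * (Dm + q⁻¹ • Cm) - q • (Cm * A₁₁) := by rw [mul_assoc, hE5]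
      _ = A₁₁ * Dm + q⁻¹ • (A₁₁ * Cm) - q • (Cm * A₁₁) := by rw [mul_add, mul_smul_comm]
      _ = A₁₁ * Dm := by rw [← hCA]; abel
  have hd7 : Dm * A₁₂ = A₁₂ * Dm := by
    have hswap : (A₁₁ * A₂₂) * A₁₂ = A₁₂ * (A₁₁ * A₂₂) := by
      have h3' : A₂₂ * A₁₂ = q⁻¹ • (A₁₂ * A₂₂) := by
        rw [h3, smul_smul, inv_mul_cancel₀ hq0, one_smul]
      calc (A₁₁ * A₂₂) * A₁₂ = A₁₁ * (A₂₂ * A₁₂) := by rw [mul_assoc]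
        _ = q⁻¹ • ((A₁₁ * A₁₂) * A₂₂) := by rw [h3', mul_smul_comm, mul_assoc]
        _ = (q⁻¹ * q) • (A₁₂ * (A₁₁ * A₂₂)) := by
            rw [h1, smul_mul_assoc, smul_smul, mul_assoc]
        _ = A₁₂ * (A₁₁ * A₂₂) := by rw [inv_mul_cancel₀ hq0, one_smul]
    rw [hDm, sub_mul, mul_sub, hswap, smul_mul_assoc, mul_smul_comm, hE3]
  have hd8 : Dm * A₂₁ = A₂₁ * Dm := by
    have hswap : (A₁₁ * A₂₂) * A₂₁ = A₂₁ * (A₁₁ * A₂₂) := by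
      have h4' : A₂₂ * A₂₁ = q⁻¹ • (A₂₁ * A₂₂) := by
        rw [h4, smul_smul, inv_mul_cancel₀ hq0, one_smul]
      calc (A₁₁ * A₂₂) * A₂₁ = A₁₁ * (A₂₂ * A₂₁) := by rw [mul_assoc]
        _ = q⁻¹ • ((A₁₁ * A₂₁) * A₂₂) := by rw [h4', mul_smul_comm, mul_assoc]
        _ = (q⁻¹ * q) • (A₂₁ * (A₁₁ * A₂₂)) := by
            rw [h2, smul_mul_assoc, smul_smul, mul_assoc]
        _ = A₂₁ * (A₁₁ * A₂₂) := by rw [inv_mul_cancel₀ hq0, one_smul]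
    rw [hDm, sub_mul, mul_sub, hswap, smul_mul_assoc, mul_smul_comm, hE4]
  have hd9 : Dm * A₂₂ = A₂₂ * Dm := by
    have h6'' : A₁₁ * A₂₂ = A₂₂ * A₁₁ + (q - q⁻¹) • Cm := by
      rw [← h6]; abel
    have hstep : (A₁₁ * A₂₂) * A₂₂ = A₂₂ * (A₁₁ * A₂₂) + (q - q⁻¹) • (Cm * A₂₂) := by
      calc (A₁₁ * A₂₂) * A₂₂ = (A₂₂ * A₁₁ + (q - q⁻¹) • Cm) * A₂₂ := by rw [h6'']
        _ = A₂₂ * (A₁₁ * A₂₂) + (q - q⁻¹) • (Cm * A₂₂) := by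
            rw [add_mul, smul_mul_assoc, mul_assoc]
    calc Dm * A₂₂ = (A₁₁ * A₂₂) * A₂₂ - q • (Cm * A₂₂) := by
          rw [hDm, sub_mul, smul_mul_assoc]
      _ = A₂₂ * (A₁₁ * A₂₂) + (q - q⁻¹) • (Cm * A₂₂) - q • (Cm * A₂₂) := by
          rw [hstep]
      _ = A₂₂ * (A₁₁ * A₂₂) - q⁻¹ • (Cm * A₂₂) := by rw [sub_smul]; abel
      _ = A₂₂ * (A₁₁ * A₂₂) - q • (A₂₂ * Cm) := by rw [hCA2]
      _ = A₂₂ * Dm := by rw [hDm, mul_sub, mul_smul_comm]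
  -- invertibility of A₁₁
  have hdetD : Dm.det ≠ 0 := (Matrix.isUnit_iff_isUnit_det Dm |>.mp hD).ne_zero
  have hdetU : (A₁₁ * A₂₂).det ≠ 0 := by
    intro hdet0
    obtain ⟨x, hx0, hx⟩ := (Matrix.exists_mulVec_eq_zero_iff).mpr hdet0
    set v : ℕ → (Fin n → ℂ) := fun k => (A₁₁ ^ k) *ᵥ x with hv
    have hvsucc : ∀ k, v (k + 1) = A₁₁ *ᵥ v k := by
      intro k
      rw [hv]
      simp only
      rw [Matrix.mulVec_mulVec, ← pow_succ']
    have hL : ∀ k : ℕ, (Dm + q ^ (2 * k + 1) • Cm) *ᵥ v k = 0 := by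
      intro k
      induction k with
      | zero =>
        have : v 0 = x := by rw [hv]; simp
        rw [this]
        simpa [← hDC] using hx
      | succ k ih =>
        have hkey : (Dm + q ^ (2 * (k + 1) + 1) • Cm) * A₁₁
            = A₁₁ * (Dm + q ^ (2 * k + 1) • Cm) := by
          have hexp : q ^ (2 * (k + 1) + 1) = q ^ (2 * k + 1) * (q * q) := by ring
          calc (Dm + q ^ (2 * (k + 1) + 1) • Cm) * A₁₁
              = Dm * A₁₁ + q ^ (2 * (k + 1) + 1) • (Cm * A₁₁) := by
                rw [add_mul, smul_mul_assoc]
            _ = A₁₁ * Dm + q ^ (2 * k + 1) • ((q * q) • (Cm * A₁₁)) := by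
                rw [hd6, hexp, ← smul_smul]
            _ = A₁₁ * Dm + q ^ (2 * k + 1) • (A₁₁ * Cm) := by rw [← hE1]
            _ = A₁₁ * (Dm + q ^ (2 * k + 1) • Cm) := by rw [mul_add, mul_smul_comm]
        rw [hvsucc k, Matrix.mulVec_mulVec, hkey, ← Matrix.mulVec_mulVec, ih,
          Matrix.mulVec_zero]
    have hM : ∀ k : ℕ, v k ≠ 0 := by
      intro k
      induction k with
      | zero => simpa [hv] using hx0
      | succ k ih =>
        intro hv1
        apply ih
        -- from A₁₁ *ᵥ v k = 0 derive v k = 0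
        have hA11v : A₁₁ *ᵥ v k = 0 := by rw [← hvsucc k]; exact hv1
        have h22 : (Dm + q⁻¹ • Cm) *ᵥ v k = 0 := by
          rw [← hE5, ← Matrix.mulVec_mulVec, hA11v, Matrix.mulVec_zero]
        have hsub : ((q ^ (2 * k + 1) - q⁻¹) • Cm) *ᵥ v k = 0 := by
          have : ((Dm + q ^ (2 * k + 1) • Cm) - (Dm + q⁻¹ • Cm)) *ᵥ v k = 0 := by
            rw [Matrix.sub_mulVec, hL k, h22, sub_zero]
          simpa [add_sub_add_left_eq_sub, ← sub_smul] using this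
        have hscal : q ^ (2 * k + 1) - q⁻¹ ≠ 0 := by
          intro h0
          have hqq : q ^ (2 * k + 1) = q⁻¹ := by linear_combination h0
          have : q ^ (2 * k + 2) = 1 := by
            have : q * q ^ (2 * k + 1) = q * q⁻¹ := by rw [hqq]
            rw [mul_inv_cancel₀ hq0] at this
            rw [← this]; ring
          exact hq (2 * k + 2) (by omega) this
        have hCv : Cm *ᵥ v k = 0 := by
          have := hsub
          rw [Matrix.smul_mulVec] at this
          exact (smul_eq_zero.mp this).resolve_left hscal
        have hDv : Dm *ᵥ v k = 0 := by
          have := hL k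
          rw [Matrix.add_mulVec, Matrix.smul_mulVec, hCv, smul_zero, add_zero] at this
          exact this
        by_contra hvk
        exact hdetD ((Matrix.exists_mulVec_eq_zero_iff).mp ⟨v k, hvk, hDv⟩)
    exact aux_det_chain q hq0 hq Dm Cm hdetD fun k =>
      (Matrix.exists_mulVec_eq_zero_iff).mp ⟨v k, hM k, hL k⟩
  have hA11 : IsUnit A₁₁ := by
    rw [Matrix.isUnit_iff_isUnit_det, isUnit_iff_ne_zero]
    rw [Matrix.det_mul] at hdetU
    exact left_ne_zero_of_mul hdetU
  have hdetA : IsUnit A₁₁.det := (Matrix.isUnit_iff_isUnit_det A₁₁).mp hA11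
  have hBl : A₁₁⁻¹ * A₁₁ = 1 := Matrix.nonsing_inv_mul _ hdetA
  have hBr : A₁₁ * A₁₁⁻¹ = 1 := Matrix.mul_nonsing_inv _ hdetA
  -- the compatibility relations for A'₂₂
  have hB12 : A₁₂ * A₁₁⁻¹ = q • (A₁₁⁻¹ * A₁₂) := by
    calc A₁₂ * A₁₁⁻¹ = ((A₁₁⁻¹ * A₁₁) * A₁₂) * A₁₁⁻¹ := by rw [hBl, one_mul]
      _ = A₁₁⁻¹ * ((A₁₁ * A₁₂) * A₁₁⁻¹) := by rw [mul_assoc, mul_assoc, mul_assoc]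
      _ = A₁₁⁻¹ * ((q • (A₁₂ * A₁₁)) * A₁₁⁻¹) := by rw [h1]
      _ = q • (A₁₁⁻¹ * (A₁₂ * (A₁₁ * A₁₁⁻¹))) := by
          rw [smul_mul_assoc, mul_smul_comm, mul_assoc]
      _ = q • (A₁₁⁻¹ * A₁₂) := by rw [hBr, mul_one]
  have hB21 : A₂₁ * A₁₁⁻¹ = q • (A₁₁⁻¹ * A₂₁) := by
    calc A₂₁ * A₁₁⁻¹ = ((A₁₁⁻¹ * A₁₁) * A₂₁) * A₁₁⁻¹ := by rw [hBl, one_mul]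
      _ = A₁₁⁻¹ * ((A₁₁ * A₂₁) * A₁₁⁻¹) := by rw [mul_assoc, mul_assoc, mul_assoc]
      _ = A₁₁⁻¹ * ((q • (A₂₁ * A₁₁)) * A₁₁⁻¹) := by rw [h2]
      _ = q • (A₁₁⁻¹ * (A₂₁ * (A₁₁ * A₁₁⁻¹))) := by
          rw [smul_mul_assoc, mul_smul_comm, mul_assoc]
      _ = q • (A₁₁⁻¹ * A₂₁) := by rw [hBr, mul_one]
  have hX12 : (1 + q • Cm) * A₁₂ = A₁₂ * (1 + q • Cm) := by
    rw [add_mul, mul_add, one_mul, mul_one, smul_mul_assoc, mul_smul_comm, hE3]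
  have hX21 : (1 + q • Cm) * A₂₁ = A₂₁ * (1 + q • Cm) := by
    rw [add_mul, mul_add, one_mul, mul_one, smul_mul_assoc, mul_smul_comm, hE4]
  have hG2 : A₁₂ * (A₁₁⁻¹ * (1 + q • Cm)) = q • ((A₁₁⁻¹ * (1 + q • Cm)) * A₁₂) := by
    calc A₁₂ * (A₁₁⁻¹ * (1 + q • Cm)) = (A₁₂ * A₁₁⁻¹) * (1 + q • Cm) := by rw [mul_assoc]
      _ = q • (A₁₁⁻¹ * ((1 + q • Cm) * A₁₂)) := by
          rw [hB12, smul_mul_assoc, mul_assoc, ← hX12]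
      _ = q • ((A₁₁⁻¹ * (1 + q • Cm)) * A₁₂) := by rw [mul_assoc]
  have hG3 : A₂₁ * (A₁₁⁻¹ * (1 + q • Cm)) = q • ((A₁₁⁻¹ * (1 + q • Cm)) * A₂₁) := by
    calc A₂₁ * (A₁₁⁻¹ * (1 + q • Cm)) = (A₂₁ * A₁₁⁻¹) * (1 + q • Cm) := by rw [mul_assoc]
      _ = q • (A₁₁⁻¹ * ((1 + q • Cm) * A₂₁)) := by
          rw [hB21, smul_mul_assoc, mul_assoc, ← hX21]
      _ = q • ((A₁₁⁻¹ * (1 + q • Cm)) * A₂₁) := by rw [mul_assoc]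
  have hlhs1 : A₁₁ * (A₁₁⁻¹ * (1 + q • Cm)) = 1 + q • Cm := by
    rw [← mul_assoc, hBr, one_mul]
  have hlhs2 : (A₁₁⁻¹ * (1 + q • Cm)) * A₁₁ = 1 + q⁻¹ • Cm := by
    calc (A₁₁⁻¹ * (1 + q • Cm)) * A₁₁ = A₁₁⁻¹ * (A₁₁ + q • (Cm * A₁₁)) := by
          rw [mul_assoc, add_mul, one_mul, smul_mul_assoc]
      _ = A₁₁⁻¹ * (A₁₁ + q⁻¹ • (A₁₁ * Cm)) := by rw [hCA]
      _ = A₁₁⁻¹ * A₁₁ + q⁻¹ • ((A₁₁⁻¹ * A₁₁) * Cm) := by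
          rw [mul_add, mul_smul_comm, mul_assoc]
      _ = 1 + q⁻¹ • Cm := by rw [hBl, one_mul]
  have hG4 : A₁₁ * (A₁₁⁻¹ * (1 + q • Cm)) - (A₁₁⁻¹ * (1 + q • Cm)) * A₁₁
      = (q - q⁻¹) • Cm := by
    rw [hlhs1, hlhs2, sub_smul]
    abel
  have hG5 : A₁₁ * (A₁₁⁻¹ * (1 + q • Cm)) - q • Cm = 1 := by
    rw [hlhs1]
    abel
  have hG10 : A₂₂ = A₁₁⁻¹ * (1 + q • Cm) + A₁₁⁻¹ * (Dm - 1) := by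
    have : (1 + q • Cm) + (Dm - 1) = Dm + q • Cm := by abel
    rw [← mul_add, this, ← hDC, ← mul_assoc, hBl, one_mul]
  exact ⟨hA11, hG2, hG3, hG4, hG5, hd6, hd7, hd8, hd9, hG10⟩
end

section
/- Let A₁₂ = αe₁₂ + βe₂₃ + γe₂₄ and A₂₁ = α₁e₁₂ + β₁e₂₃ + γ₁e₂₄ be 4×4 complex matrices (α, β, γ, α₁, β₁, γ₁ ∈ ℂ). If A₁₂A₂₁ = A₂₁A₁₂ and A₁₂A₂₁ ≠ 0, then there exists a nonzero ε ∈ ℂ with A₂₁ = ε·A₁₂. -/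
/-!
Both matrices lie in the span of `e₁₂, e₂₃, e₂₄`, whose only nonzero products are
`e₁₂e₂₃ = e₁₃` and `e₁₂e₂₄ = e₁₄`. Hence `A₁₂A₂₁ = α(β₁e₁₃ + γ₁e₁₄)` and
`A₂₁A₁₂ = α₁(βe₁₃ + γe₁₄)`, so commutation says `α(β₁, γ₁) = α₁(β, γ)`; as this vector is
nonzero, `α ≠ 0` and `(α₁, β₁, γ₁) = (α₁/α)(α, β, γ)`.
-/

/-- The 4×4 matrix unit `e_{ij}` (indices `0,…,3`). -/
def e (i j : Fin 4) : Matrix (Fin 4) (Fin 4) ℂ := Matrix.single i j 1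

theorem exists_ne_zero_eq_smul_of_smul_eq {K M : Type*} [Field K] [AddCommGroup M] [Module K M]
    {a a₁ : K} {v v₁ : M} (h : a • v₁ = a₁ • v) (hne : a • v₁ ≠ 0) :
    ∃ ε : K, ε ≠ 0 ∧ a₁ = ε * a ∧ v₁ = ε • v := by
  have ha : a ≠ 0 := by rintro rfl; exact hne (zero_smul K v₁)
  have ha₁ : a₁ ≠ 0 := by rintro rfl; exact hne (h.trans (zero_smul K v))
  refine ⟨a₁ / a, div_ne_zero ha₁ ha, (div_mul_cancel₀ a₁ ha).symm, ?_⟩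
  rw [div_eq_inv_mul, mul_smul, ← h, inv_smul_smul₀ ha]

def qCommutingMatrix (α β γ : ℂ) : Matrix (Fin 4) (Fin 4) ℂ :=
  α • e 0 1 + β • e 1 2 + γ • e 1 3

def cornerMatrix (v : ℂ × ℂ) : Matrix (Fin 4) (Fin 4) ℂ :=
  v.1 • e 0 2 + v.2 • e 0 3

theorem cornerMatrix_injective : Function.Injective cornerMatrix := by
  intro v w h
  have h2 := congrFun (congrFun h 0) 2
  have h3 := congrFun (congrFun h 0) 3
  simp [cornerMatrix, e] at h2 h3
  exact Prod.ext h2 h3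

theorem cornerMatrix_zero : cornerMatrix 0 = 0 := by
  simp [cornerMatrix]

theorem qCommutingMatrix_mul (α β γ α₁ β₁ γ₁ : ℂ) :
    qCommutingMatrix α β γ * qCommutingMatrix α₁ β₁ γ₁ = cornerMatrix (α • (β₁, γ₁)) := by
  simp [qCommutingMatrix, cornerMatrix, e, add_mul, mul_add]

/-- if `A₁₂ = αe₁₂ + βe₂₃ + γe₂₄` and
`A₂₁ = α₁e₁₂ + β₁e₂₃ + γ₁e₂₄` commute and their product is nonzero, then
`A₂₁ = ε • A₁₂` for some nonzero `ε`. -/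
theorem proportional_of_commuting_case1 (α β γ α₁ β₁ γ₁ : ℂ)
    (hcomm : (α • e 0 1 + β • e 1 2 + γ • e 1 3) * (α₁ • e 0 1 + β₁ • e 1 2 + γ₁ • e 1 3) =
      (α₁ • e 0 1 + β₁ • e 1 2 + γ₁ • e 1 3) * (α • e 0 1 + β • e 1 2 + γ • e 1 3))
    (hne : (α • e 0 1 + β • e 1 2 + γ • e 1 3) * (α₁ • e 0 1 + β₁ • e 1 2 + γ₁ • e 1 3) ≠ 0) :
    ∃ ε : ℂ, ε ≠ 0 ∧
      α₁ • e 0 1 + β₁ • e 1 2 + γ₁ • e 1 3 = ε • (α • e 0 1 + β • e 1 2 + γ • e 1 3) := by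
  change qCommutingMatrix α β γ * qCommutingMatrix α₁ β₁ γ₁ =
    qCommutingMatrix α₁ β₁ γ₁ * qCommutingMatrix α β γ at hcomm
  change qCommutingMatrix α β γ * qCommutingMatrix α₁ β₁ γ₁ ≠ 0 at hne
  rw [qCommutingMatrix_mul, qCommutingMatrix_mul] at hcomm
  rw [qCommutingMatrix_mul] at hne
  obtain ⟨ε, hε, hα₁, hβγ₁⟩ := exists_ne_zero_eq_smul_of_smul_eq (cornerMatrix_injective hcomm)
    (fun h ↦ hne (by rw [h, cornerMatrix_zero]))
  rw [Prod.smul_mk, Prod.mk.injEq, smul_eq_mul, smul_eq_mul] at hβγ₁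
  obtain ⟨rfl, rfl⟩ := hβγ₁
  subst hα₁
  exact ⟨ε, hε, by simp only [smul_add, smul_smul]⟩
end

section
/- Let A₁₂ = αe₁₂ + βe₂₃ + γe₃₄ and A₂₁ = α₁e₁₂ + β₁e₂₃ + γ₁e₃₄ be 4×4 complex matrices (α, β, γ, α₁, β₁, γ₁ ∈ ℂ). If A₁₂A₂₁ = A₂₁A₁₂ and A₁₂A₂₁ ≠ 0, then there exists a nonzero ε ∈ ℂ with A₂₁ = ε·A₁₂. -/
lemma exists_ne_zero_eq_mul_of_mul_eq_mul {K : Type*} [Field K] {a b c a' b' c' : K}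
    (hab : a * b' = a' * b) (hbc : b * c' = b' * c) (hne : a * b' ≠ 0 ∨ b * c' ≠ 0) :
    ∃ ε ≠ 0, a' = ε * a ∧ b' = ε * b ∧ c' = ε * c := by
  have hb : b ≠ 0 ∧ b' ≠ 0 := by
    rcases hne with h | h
    · exact ⟨right_ne_zero_of_mul (hab ▸ h), right_ne_zero_of_mul h⟩
    · exact ⟨left_ne_zero_of_mul h, left_ne_zero_of_mul (hbc ▸ h)⟩
  obtain ⟨hb, hb'⟩ := hb
  refine ⟨b' / b, div_ne_zero hb' hb, ?_, ?_, ?_⟩ <;> field_simp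
  · linear_combination -hab
  · linear_combination hbc

lemma e_mul_e (i j k : Fin 4) : e i j * e j k = e i k := by
  simp [e]

lemma e_mul_e_of_ne (i j k l : Fin 4) (h : j ≠ k) : e i j * e k l = 0 := by
  simp [e, h]

lemma superdiag_mul_superdiag (α β γ α₁ β₁ γ₁ : ℂ) :
    (α • e 0 1 + β • e 1 2 + γ • e 2 3) * (α₁ • e 0 1 + β₁ • e 1 2 + γ₁ • e 2 3) =
      (α * β₁) • e 0 2 + (β * γ₁) • e 1 3 := by
  simp [add_mul, mul_add, e_mul_e, e_mul_e_of_ne, smul_smul, mul_comm]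

lemma smul_e02_add_smul_e13_inj {a b a' b' : ℂ}
    (h : a • e 0 2 + b • e 1 3 = a' • e 0 2 + b' • e 1 3) : a = a' ∧ b = b' := by
  constructor
  · simpa [e] using congrFun (congrFun h 0) 2
  · simpa [e] using congrFun (congrFun h 1) 3

/-- if `A₁₂ = αe₁₂ + βe₂₃ + γe₃₄` and
`A₂₁ = α₁e₁₂ + β₁e₂₃ + γ₁e₃₄` commute and their product is nonzero, then
`A₂₁ = ε • A₁₂` for some nonzero `ε`. -/
theorem proportional_of_commuting_case4 (α β γ α₁ β₁ γ₁ : ℂ)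
    (hcomm : (α • e 0 1 + β • e 1 2 + γ • e 2 3) * (α₁ • e 0 1 + β₁ • e 1 2 + γ₁ • e 2 3) =
      (α₁ • e 0 1 + β₁ • e 1 2 + γ₁ • e 2 3) * (α • e 0 1 + β • e 1 2 + γ • e 2 3))
    (hne : (α • e 0 1 + β • e 1 2 + γ • e 2 3) * (α₁ • e 0 1 + β₁ • e 1 2 + γ₁ • e 2 3) ≠ 0) :
    ∃ ε : ℂ, ε ≠ 0 ∧
      α₁ • e 0 1 + β₁ • e 1 2 + γ₁ • e 2 3 = ε • (α • e 0 1 + β • e 1 2 + γ • e 2 3) := by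
  simp only [superdiag_mul_superdiag] at hcomm hne
  obtain ⟨h02, h13⟩ := smul_e02_add_smul_e13_inj hcomm
  have hprod : α * β₁ ≠ 0 ∨ β * γ₁ ≠ 0 := by
    contrapose! hne
    simp [hne.1, hne.2]
  obtain ⟨ε, hε, rfl, rfl, rfl⟩ := exists_ne_zero_eq_mul_of_mul_eq_mul h02 h13 hprod
  exact ⟨ε, hε, by simp only [smul_add, smul_smul]⟩
end

section
/- Let q ∈ ℂ with q² ≠ 1, let ε ∈ ℂ be nonzero, and let A be the 4×4 complex matrix consisting of two 2×2 Jordan blocks A = ε(e₁₁ + e₂₂) + e₁₂ + (e₃₃ + e₄₄) + e₃₄. Then B(A)² = 0; that is, for all 4×4 complex matrices B and B' with AB = qBA and AB' = qB'A, one has BB' = 0. -/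
open Matrix

def QCommute {K R : Type*} [Mul R] [SMul K R] (q : K) (a b : R) : Prop :=
  a * b = q • (b * a)

theorem QCommute.map {K R S F : Type*} [CommSemiring K] [Semiring R] [Semiring S]
    [Algebra K R] [Algebra K S] [FunLike F R S] [AlgHomClass F K R S] (f : F) {q : K} {a b : R}
    (h : QCommute q a b) : QCommute q (f a) (f b) := by
  rw [QCommute, ← map_mul, ← map_mul, ← map_smul, h]

section JordanBlocks

variable {K : Type*} [Field K]

def jordanBlock2 (a : K) : Matrix (Fin 2) (Fin 2) K := !![a, 1; 0, a]

theorem eq_zero_of_jordanBlock2_mul_eq_smul_mul {a b q : K} (hab : a ≠ q * b)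
    {X : Matrix (Fin 2) (Fin 2) K}
    (hX : jordanBlock2 a * X = q • (X * jordanBlock2 b)) : X = 0 := by
  rw [← Matrix.ext_iff] at hX
  simp only [Fin.forall_fin_two, jordanBlock2, Fin.isValue, mul_apply, of_apply, cons_val',
    cons_val_fin_one, cons_val_zero, Fin.sum_univ_two, cons_val_one, one_mul, Matrix.smul_apply,
    mul_zero, add_zero, smul_eq_mul, mul_one, zero_mul, zero_add] at hX
  obtain ⟨⟨h00, h01⟩, h10, h11⟩ := hX
  have cancel (x : K) (hx : (a - q * b) * x = 0) : x = 0 :=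
    (mul_eq_zero.1 hx).resolve_left (sub_ne_zero.2 hab)
  have x10 : X 1 0 = 0 := cancel _ (by linear_combination h10)
  have x00 : X 0 0 = 0 := cancel _ (by linear_combination h00 - x10)
  have x11 : X 1 1 = 0 := cancel _ (by linear_combination h11 + q * x10)
  have x01 : X 0 1 = 0 := cancel _ (by linear_combination h01 - x11 + q * x00)
  ext i j
  fin_cases i <;> fin_cases j <;> assumption

theorem qCommute_fromBlocks_diag_iff {m n : Type*} [Fintype m] [Fintype n] {q : K}
    {A₁ : Matrix m m K} {A₂ : Matrix n n K} {B₁₁ : Matrix m m K} {B₁₂ : Matrix m n K}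
    {B₂₁ : Matrix n m K} {B₂₂ : Matrix n n K} :
    QCommute q (fromBlocks A₁ 0 0 A₂) (fromBlocks B₁₁ B₁₂ B₂₁ B₂₂) ↔
      A₁ * B₁₁ = q • (B₁₁ * A₁) ∧ A₁ * B₁₂ = q • (B₁₂ * A₂) ∧
        A₂ * B₂₁ = q • (B₂₁ * A₁) ∧ A₂ * B₂₂ = q • (B₂₂ * A₂) := by
  simp [QCommute, fromBlocks_multiply, fromBlocks_smul, fromBlocks_inj]

theorem QCommute.mul_eq_zero_of_jordanBlock2_fromBlocks {q ε : K} (hq : q ^ 2 ≠ 1) (hε : ε ≠ 0)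
    {B B' : Matrix (Fin 2 ⊕ Fin 2) (Fin 2 ⊕ Fin 2) K}
    (hB : QCommute q (fromBlocks (jordanBlock2 ε) 0 0 (jordanBlock2 1)) B)
    (hB' : QCommute q (fromBlocks (jordanBlock2 ε) 0 0 (jordanBlock2 1)) B') :
    B * B' = 0 := by
  rw [← fromBlocks_toBlocks B] at hB ⊢
  rw [← fromBlocks_toBlocks B'] at hB' ⊢
  obtain ⟨h₁₁, h₁₂, h₂₁, h₂₂⟩ := qCommute_fromBlocks_diag_iff.1 hB
  obtain ⟨h₁₁', h₁₂', h₂₁', h₂₂'⟩ := qCommute_fromBlocks_diag_iff.1 hB'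
  have hq₁ : (1 : K) ≠ q * 1 := fun h => hq (by linear_combination -(q + 1) * h)
  have hqε : ε ≠ q * ε := fun h => hq₁ (mul_right_cancel₀ hε (by linear_combination h))
  rw [eq_zero_of_jordanBlock2_mul_eq_smul_mul hqε h₁₁,
    eq_zero_of_jordanBlock2_mul_eq_smul_mul hq₁ h₂₂,
    eq_zero_of_jordanBlock2_mul_eq_smul_mul hqε h₁₁',
    eq_zero_of_jordanBlock2_mul_eq_smul_mul hq₁ h₂₂']
  rcases eq_or_ne ε q with rfl | hεq
  · have hεε : (1 : K) ≠ ε * ε := fun h => hq (by linear_combination -h)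
    rw [eq_zero_of_jordanBlock2_mul_eq_smul_mul hεε h₂₁,
      eq_zero_of_jordanBlock2_mul_eq_smul_mul hεε h₂₁']
    simp [fromBlocks_multiply]
  · have hεq₁ : ε ≠ q * 1 := by rwa [mul_one]
    rw [eq_zero_of_jordanBlock2_mul_eq_smul_mul hεq₁ h₁₂,
      eq_zero_of_jordanBlock2_mul_eq_smul_mul hεq₁ h₁₂']
    simp [fromBlocks_multiply]

end JordanBlocks

/-- for the 4×4 matrix `A = ε(e₁₁+e₂₂) + e₁₂ + (e₃₃+e₄₄) + e₃₄`
consisting of two 2×2 Jordan blocks (`ε ≠ 0`, `q² ≠ 1`), one has `B(A)² = 0`: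
any two matrices `q`-commuting with `A` have zero product. -/
theorem two_jordan_blocks_qcommutant_square_zero (q ε : ℂ) (hq : q ^ 2 ≠ 1) (hε : ε ≠ 0)
    (B B' : Matrix (Fin 4) (Fin 4) ℂ)
    (hB : (ε • (e 0 0 + e 1 1) + e 0 1 + (e 2 2 + e 3 3) + e 2 3) * B =
      q • (B * (ε • (e 0 0 + e 1 1) + e 0 1 + (e 2 2 + e 3 3) + e 2 3)))
    (hB' : (ε • (e 0 0 + e 1 1) + e 0 1 + (e 2 2 + e 3 3) + e 2 3) * B' =
      q • (B' * (ε • (e 0 0 + e 1 1) + e 0 1 + (e 2 2 + e 3 3) + e 2 3))) :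
    B * B' = 0 := by
  let φ := reindexAlgEquiv ℂ ℂ (finSumFinEquiv : Fin 2 ⊕ Fin 2 ≃ Fin 4).symm
  have hA : φ (ε • (e 0 0 + e 1 1) + e 0 1 + (e 2 2 + e 3 3) + e 2 3) =
      fromBlocks (jordanBlock2 ε) 0 0 (jordanBlock2 1) := by
    ext (i | i) (j | j) <;> fin_cases i <;> fin_cases j <;>
      simp +decide [φ, e, jordanBlock2, single]
  apply φ.injective
  rw [map_mul, map_zero]
  refine QCommute.mul_eq_zero_of_jordanBlock2_fromBlocks hq hε ?_ ?_
  · simpa only [hA] using QCommute.map φ hB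
  · simpa only [hA] using QCommute.map φ hB'
end

section
/- Let q ∈ ℂ with q ≠ 0, q ≠ 1 and q ≠ −1, let α ∈ ℂ be nonzero, and consider the representation S1 of SL_q(2,ℂ) by 4×4 complex matrices: A₁₁ = diag(q²,q,1,1), A₁₂ = e₁₂ + e₂₃, A₂₁ = α·A₁₂, A₂₂ = A₁₁⁻¹ + αq⁻¹e₁₃. Then the set of matrices v ∈ M₄(ℂ) commuting with all four matrices A₁₁, A₁₂, A₂₁, A₂₂ (the algebra of invariants of the corresponding inner action) is exactly {β·1 + γ·e₄₄ + δ·e₄₃ : β, γ, δ ∈ ℂ}, a three-dimensional algebra isomorphic to the algebra of upper triangular 2×2 matrices. -/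
namespace Matrix

variable {n R : Type*} [Fintype n] [DecidableEq n]

theorem Commute.inv_right [CommRing R] {A B : Matrix n n R} (h : Commute A B) :
    Commute A B⁻¹ := by
  simpa only [zpow_neg_one] using Matrix.Commute.zpow_right h (-1)

theorem apply_eq_zero_of_commute_diagonal [CommRing R] [NoZeroDivisors R] {v : Matrix n n R}
    {d : n → R} (h : Commute v (diagonal d)) {i j : n} (hij : d i ≠ d j) : v i j = 0 := by
  have hentry : v i j * d j = d i * v i j := by
    simpa only [mul_diagonal, diagonal_mul] using congr_fun₂ h.eq i j
  refine (mul_eq_zero.mp ?_).resolve_left (sub_ne_zero.mpr hij.symm)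
  linear_combination hentry

theorem commute_single_diagonal [CommSemiring R] {d : n → R} {i j : n} (hij : d i = d j) (c : R) :
    Commute (single i j c) (diagonal d) := by
  rw [Commute, SemiconjBy]
  ext a b
  simp only [mul_diagonal, diagonal_mul, single, of_apply]
  split_ifs with h
  · rw [← h.1, ← h.2, hij, mul_comm]
  · simp

theorem commute_single_single_of_ne [NonUnitalNonAssocSemiring R] {i j k l : n}
    (hjk : j ≠ k) (hli : l ≠ i) (a b : R) : Commute (single i j a) (single k l b) := by
  rw [Commute, SemiconjBy, single_mul_single_of_ne _ _ _ _ hjk,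
    single_mul_single_of_ne _ _ _ _ hli]

end Matrix

open Matrix

theorem commute_e_three_of_two_le (q : ℂ) {j : Fin 4} (hj : 2 ≤ j) :
    Commute (e 3 j) (diagonal ![q ^ 2, q, 1, 1]) ∧ Commute (e 3 j) (e 0 1 + e 1 2) ∧
      Commute (e 3 j) (e 0 2) := by
  have hj0 : j ≠ 0 := by omega
  have hj1 : j ≠ 1 := by omega
  refine ⟨commute_single_diagonal ?_ 1,
    (commute_single_single_of_ne hj0 (by decide) 1 1).add_right
      (commute_single_single_of_ne hj1 (by decide) 1 1),
    commute_single_single_of_ne hj0 (by decide) 1 1⟩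
  fin_cases j <;> simp_all

theorem eq_of_commute_diagonal_of_commute_shift {q : ℂ} (hq0 : q ≠ 0) (hq1 : q ≠ 1)
    (hq1' : q ≠ -1) {v : Matrix (Fin 4) (Fin 4) ℂ} (hD : Commute v (diagonal ![q ^ 2, q, 1, 1]))
    (hN : Commute v (e 0 1 + e 1 2)) :
    v = v 0 0 • 1 + (v 3 3 - v 0 0) • e 3 3 + v 3 2 • e 3 2 := by
  have hqq : q ^ 2 ≠ q := by rwa [sq, Ne, mul_eq_left₀ hq0]
  have hq2 : q ^ 2 ≠ 1 := by simp [sq_eq_one_iff, hq1, hq1']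
  have hzero {i j : Fin 4} (hij : ![q ^ 2, q, 1, 1] i ≠ ![q ^ 2, q, 1, 1] j) : v i j = 0 :=
    apply_eq_zero_of_commute_diagonal hD hij
  have hN' (i j : Fin 4) := congr_fun₂ hN.eq i j
  have h01 : v 0 0 = v 1 1 := by simpa [e, mul_add, add_mul] using hN' 0 1
  have h12 : v 1 1 = v 2 2 := by simpa [e, mul_add, add_mul] using hN' 1 2
  have h23 : 0 = v 2 3 := by simpa [e, mul_add, add_mul] using hN' 1 3
  ext i j
  fin_cases i <;> fin_cases j <;> simp [e, h01, h12, ← h23] <;>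
    exact hzero (by simp [hqq, hq2, hq1, hqq.symm, hq2.symm, hq1.symm])

theorem commute_S1_generators_of_commute {q α : ℂ} {v : Matrix (Fin 4) (Fin 4) ℂ}
    (hD : Commute v (diagonal ![q ^ 2, q, 1, 1])) (hN : Commute v (e 0 1 + e 1 2))
    (hE : Commute v (e 0 2)) :
    Commute v (diagonal ![q ^ 2, q, 1, 1]) ∧ Commute v (e 0 1 + e 1 2) ∧
      Commute v (α • (e 0 1 + e 1 2)) ∧
      Commute v ((diagonal ![q ^ 2, q, 1, 1])⁻¹ + (α * q⁻¹) • e 0 2) :=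
  ⟨hD, hN, hN.smul_right α, (Matrix.Commute.inv_right hD).add_right (hE.smul_right _)⟩

theorem invariants_of_S1_general (q α : ℂ) (hq0 : q ≠ 0) (hq1 : q ≠ 1) (hq1' : q ≠ -1) :
    {v : Matrix (Fin 4) (Fin 4) ℂ |
        v * Matrix.diagonal ![q ^ 2, q, 1, 1] = Matrix.diagonal ![q ^ 2, q, 1, 1] * v ∧
        v * (e 0 1 + e 1 2) = (e 0 1 + e 1 2) * v ∧
        v * (α • (e 0 1 + e 1 2)) = (α • (e 0 1 + e 1 2)) * v ∧
        v * ((Matrix.diagonal ![q ^ 2, q, 1, 1])⁻¹ + (α * q⁻¹) • e 0 2) =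
          ((Matrix.diagonal ![q ^ 2, q, 1, 1])⁻¹ + (α * q⁻¹) • e 0 2) * v} =
      {v : Matrix (Fin 4) (Fin 4) ℂ |
        ∃ β γ δ : ℂ, v = β • (1 : Matrix (Fin 4) (Fin 4) ℂ) + γ • e 3 3 + δ • e 3 2} := by
  ext v
  constructor
  · rintro ⟨hD, hN, -, -⟩
    exact ⟨_, _, _, eq_of_commute_diagonal_of_commute_shift hq0 hq1 hq1' hD hN⟩
  · rintro ⟨β, γ, δ, rfl⟩
    have hspan {X : Matrix (Fin 4) (Fin 4) ℂ} (h33 : Commute (e 3 3) X) (h32 : Commute (e 3 2) X) :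
        Commute (β • 1 + γ • e 3 3 + δ • e 3 2) X :=
      (((Commute.one_left X).smul_left β).add_left (h33.smul_left γ)).add_left (h32.smul_left δ)
    obtain ⟨hD33, hN33, hE33⟩ := commute_e_three_of_two_le q (j := 3) (by decide)
    obtain ⟨hD32, hN32, hE32⟩ := commute_e_three_of_two_le q (j := 2) (by decide)
    exact commute_S1_generators_of_commute (hspan hD33 hD32) (hspan hN33 hN32) (hspan hE33 hE32)

/-- for the representation `S1` of `SL_q(2,ℂ)`
(`A₁₁ = diag(q²,q,1,1)`, `A₁₂ = e₁₂ + e₂₃`, `A₂₁ = α A₁₂`,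
`A₂₂ = A₁₁⁻¹ + α q⁻¹ e₁₃`, with `q ≠ 0`, `q ≠ ±1`, `α ≠ 0`), the centralizer
of the four matrices in `M₄(ℂ)` is exactly `{β·1 + γ·e₄₄ + δ·e₄₃}`. -/
theorem invariants_of_S1 (q α : ℂ) (hq0 : q ≠ 0) (hq1 : q ≠ 1) (hq1' : q ≠ -1)
    (hα : α ≠ 0) :
    {v : Matrix (Fin 4) (Fin 4) ℂ |
        v * Matrix.diagonal ![q ^ 2, q, 1, 1] = Matrix.diagonal ![q ^ 2, q, 1, 1] * v ∧
        v * (e 0 1 + e 1 2) = (e 0 1 + e 1 2) * v ∧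
        v * (α • (e 0 1 + e 1 2)) = (α • (e 0 1 + e 1 2)) * v ∧
        v * ((Matrix.diagonal ![q ^ 2, q, 1, 1])⁻¹ + (α * q⁻¹) • e 0 2) =
          ((Matrix.diagonal ![q ^ 2, q, 1, 1])⁻¹ + (α * q⁻¹) • e 0 2) * v} =
      {v : Matrix (Fin 4) (Fin 4) ℂ |
        ∃ β γ δ : ℂ, v = β • (1 : Matrix (Fin 4) (Fin 4) ℂ) + γ • e 3 3 + δ • e 3 2} :=
  invariants_of_S1_general q α hq0 hq1 hq1'
end

section
/- Let q ∈ ℂ with q ≠ 0, q ≠ 1, q² ≠ 1 and q³ ≠ 1, let α ∈ ℂ be nonzero, and consider the representation S4a of SL_q(2,ℂ) by 4×4 complex matrices: A₁₁ = diag(q³,q²,q,1), A₁₂ = e₁₂ + e₂₃ + e₃₄, A₂₁ = α·A₁₂, A₂₂ = A₁₁⁻¹ + αq⁻²e₁₃ + αq⁻¹e₂₄. Then the only matrices v ∈ M₄(ℂ) commuting with all four matrices A₁₁, A₁₂, A₂₁, A₂₂ are the scalar multiples of the identity matrix; that is, the corresponding inner action has only trivial invariants. -/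
namespace Matrix

variable {n R : Type*} [Fintype n] [DecidableEq n] [CommRing R] [NoZeroDivisors R]

theorem eq_of_commute_diagonal_of_apply_ne_zero {d : n → R} {N : Matrix n n R}
    (h : Commute (diagonal d) N) {i j : n} (hij : N i j ≠ 0) : d i = d j := by
  have hentry := congrFun (congrFun h i) j
  rw [diagonal_mul, mul_diagonal, mul_comm] at hentry
  exact mul_left_cancel₀ hij hentry

theorem isDiag_of_commute_diagonal {d : n → R} (hd : Function.Injective d) {v : Matrix n n R}
    (h : Commute (diagonal d) v) : v.IsDiag := fun _ _ hij =>
  by_contra fun hv => hij (hd (eq_of_commute_diagonal_of_apply_ne_zero h hv))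

theorem diagonal_eq_smul_one_of_commute_of_superdiag_ne_zero {m : ℕ} {d : Fin (m + 1) → R}
    {N : Matrix (Fin (m + 1)) (Fin (m + 1)) R} (h : Commute (diagonal d) N)
    (hN : ∀ i : Fin m, N i.castSucc i.succ ≠ 0) : diagonal d = d 0 • 1 := by
  have hconst : ∀ i, d i = d 0 := Fin.induction rfl fun i hi =>
    (eq_of_commute_diagonal_of_apply_ne_zero h (hN i)).symm.trans hi
  rw [smul_one_eq_diagonal]
  exact congrArg diagonal (funext hconst)

end Matrix

theorem injective_descending_powers {q : ℂ} (hq0 : q ≠ 0) (hq1 : q ≠ 1)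
    (hq2 : q ^ 2 ≠ 1) (hq3 : q ^ 3 ≠ 1) : Function.Injective ![q ^ 3, q ^ 2, q, 1] := by
  intro i j h
  fin_cases i <;> fin_cases j <;> simp at h ⊢ <;> grind

theorem invariants_of_S4a_trivial_general (q : ℂ) (hq0 : q ≠ 0) (hq1 : q ≠ 1)
    (hq2 : q ^ 2 ≠ 1) (hq3 : q ^ 3 ≠ 1)
    (v : Matrix (Fin 4) (Fin 4) ℂ)
    (h₁ : v * Matrix.diagonal ![q ^ 3, q ^ 2, q, 1] =
      Matrix.diagonal ![q ^ 3, q ^ 2, q, 1] * v)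
    (h₂ : v * (e 0 1 + e 1 2 + e 2 3) = (e 0 1 + e 1 2 + e 2 3) * v) :
    ∃ c : ℂ, v = c • (1 : Matrix (Fin 4) (Fin 4) ℂ) := by
  have hdiag : v.IsDiag :=
    Matrix.isDiag_of_commute_diagonal (injective_descending_powers hq0 hq1 hq2 hq3)
      (Commute.symm h₁)
  have hsuperdiag : ∀ i : Fin 3, (e 0 1 + e 1 2 + e 2 3) i.castSucc i.succ ≠ 0 := by
    intro i
    fin_cases i <;> simp [e]
  rw [← hdiag.diagonal_diag] at h₂ ⊢
  exact ⟨_, Matrix.diagonal_eq_smul_one_of_commute_of_superdiag_ne_zero h₂ hsuperdiag⟩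

/-- for the representation `S4a` of `SL_q(2,ℂ)`
(`A₁₁ = diag(q³,q²,q,1)`, `A₁₂ = e₁₂ + e₂₃ + e₃₄`, `A₂₁ = α A₁₂`,
`A₂₂ = A₁₁⁻¹ + α q⁻² e₁₃ + α q⁻¹ e₂₄`, with `q ≠ 0`, `q ≠ 1`, `q² ≠ 1`,
`q³ ≠ 1`, `α ≠ 0`), the only matrices commuting with all four components are
the scalar multiples of the identity. -/
theorem invariants_of_S4a_trivial (q α : ℂ) (hq0 : q ≠ 0) (hq1 : q ≠ 1)
    (hq2 : q ^ 2 ≠ 1) (hq3 : q ^ 3 ≠ 1) (hα : α ≠ 0)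
    (v : Matrix (Fin 4) (Fin 4) ℂ)
    (h₁ : v * Matrix.diagonal ![q ^ 3, q ^ 2, q, 1] =
      Matrix.diagonal ![q ^ 3, q ^ 2, q, 1] * v)
    (h₂ : v * (e 0 1 + e 1 2 + e 2 3) = (e 0 1 + e 1 2 + e 2 3) * v)
    (h₃ : v * (α • (e 0 1 + e 1 2 + e 2 3)) = (α • (e 0 1 + e 1 2 + e 2 3)) * v)
    (h₄ : v * ((Matrix.diagonal ![q ^ 3, q ^ 2, q, 1])⁻¹ +
        (α * q⁻¹ ^ 2) • e 0 2 + (α * q⁻¹) • e 1 3) =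
      ((Matrix.diagonal ![q ^ 3, q ^ 2, q, 1])⁻¹ +
        (α * q⁻¹ ^ 2) • e 0 2 + (α * q⁻¹) • e 1 3) * v) :
    ∃ c : ℂ, v = c • (1 : Matrix (Fin 4) (Fin 4) ℂ) :=
  invariants_of_S4a_trivial_general q hq0 hq1 hq2 hq3 v h₁ h₂
end
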